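/- arXiv:1101.1032 — 5 statements merged into one kernel-verified Lean document; each statement's English description precedes it below -/
import Mathlib

section
/- Assume conditions (I)–(IV) and that for all δ,η>0: √m_n·Q_n(|ε̃_n|^p·1{ζ_n−δ/m_n < Z ≤ ζ_n+η/m_n}) → 0 for p=1,2, and √m_n·Q_n(1{ζ_n−δ/m_n < Z ≤ ζ_n+η/m_n}) → 0. Then for every compact rectangle K ⊂ ℝ³, sup_{h∈K} |E*_n(h) − Ê_n(h)| → 0 in probability. (Lemma 3.3, stated in the supremum norm.) -/
/-!
Off the strip between `ζ_n` and `ζ_n + h₃/m_n`, the exact quadratic expansion of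
`m_n·(m_{ϑ_{n,h}} − m_{θ_n})` is the summand of `E*_n(h)`. Hence `E*_n(h) − Ê_n(h)` is the
empirical average of a remainder supported on `(ζ_n − B/m_n, ζ_n + B/m_n]`, and for `‖h‖ ≤ B`
it is dominated, uniformly in `h`, by `√m_n·(4B·|ε̃_n| + C)` on that strip. Markov's
inequality bounds the probability of a large supremum by `√m_n` times the `Q_n`-integrals of
`|ε̃_n|` and of `1` over the strip, and both vanish by assumption.
-/


open MeasureTheory Filter Set

noncomputable section

/-- The least squares criterion `m_θ(x) = −(y − α·1{z ≤ ζ} − β·1{z > ζ})²`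
for `θ = (α, β, ζ)` and `x = (y, z)`. -/
def mfn (θ : ℝ × ℝ × ℝ) (x : ℝ × ℝ) : ℝ :=
  -(x.1 - (if x.2 ≤ θ.2.2 then θ.1 else θ.2.1)) ^ 2

/-- The residual function `ε̃_θ(y,z) = y − α·1{z ≤ ζ} − β·1{z > ζ}` for `θ = (α,β,ζ)`. -/
def epstil (θ : ℝ × ℝ × ℝ) (x : ℝ × ℝ) : ℝ :=
  x.1 - (if x.2 ≤ θ.2.2 then θ.1 else θ.2.1)

/-- Empirical average `ℙ*_n(g)` of `g` over the sample `Xr 0, …, Xr (M-1)`. -/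
def empAvg {Ω : Type} (M : ℕ) (Xr : ℕ → Ω → ℝ × ℝ) (g : ℝ × ℝ → ℝ) (ω : Ω) : ℝ :=
  (M : ℝ)⁻¹ * ∑ k ∈ Finset.range M, g (Xr k ω)

/-- The localized process `Ê_n(h) = m_n·ℙ*_n(m_{ϑ_{n,h}} − m_{θ_n})`, where
`ϑ_{n,h} = θ_n + (h₁/√m_n, h₂/√m_n, h₃/m_n)`. -/
def Ehat {Ω : Type} (M : ℕ) (Xr : ℕ → Ω → ℝ × ℝ) (θn : ℝ × ℝ × ℝ)
    (h : ℝ × ℝ × ℝ) (ω : Ω) : ℝ :=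
  (M : ℝ) * empAvg M Xr (fun x =>
    mfn (θn.1 + h.1 / Real.sqrt M, θn.2.1 + h.2.1 / Real.sqrt M, θn.2.2 + h.2.2 / M) x
      - mfn θn x) ω

/-- The process `E*_n(h) = A*_n(h₁) + B*_n(h₂) + C*_n(h₃) + D*_n(h₃)`. -/
def Estar {Ω : Type} (M : ℕ) (Xr : ℕ → Ω → ℝ × ℝ) (θn : ℝ × ℝ × ℝ)
    (h : ℝ × ℝ × ℝ) (ω : Ω) : ℝ :=
  -- A*_n(h₁)
  (2 * h.1 * Real.sqrt M *
      empAvg M Xr (fun x => epstil θn x * (Iic θn.2.2).indicator (fun _ => (1:ℝ)) x.2) ω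
    - h.1 ^ 2 * empAvg M Xr (fun x => (Iic θn.2.2).indicator (fun _ => (1:ℝ)) x.2) ω)
  -- B*_n(h₂)
  + (2 * h.2.1 * Real.sqrt M *
      empAvg M Xr (fun x => epstil θn x * (Ioi θn.2.2).indicator (fun _ => (1:ℝ)) x.2) ω
    - h.2.1 ^ 2 * empAvg M Xr (fun x => (Ioi θn.2.2).indicator (fun _ => (1:ℝ)) x.2) ω)
  -- C*_n(h₃)
  + (-(2 * (M : ℝ) * (θn.1 - θn.2.1)) *
      empAvg M Xr (fun x => epstil θn x *
        (Ioc (θn.2.2 + h.2.2 / M) θn.2.2).indicator (fun _ => (1:ℝ)) x.2) ω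
    - (M : ℝ) * (θn.1 - θn.2.1) ^ 2 *
      empAvg M Xr (fun x =>
        (Ioc (θn.2.2 + h.2.2 / M) θn.2.2).indicator (fun _ => (1:ℝ)) x.2) ω)
  -- D*_n(h₃)
  + (-(2 * (M : ℝ) * (θn.2.1 - θn.1)) *
      empAvg M Xr (fun x => epstil θn x *
        (Ioc θn.2.2 (θn.2.2 + h.2.2 / M)).indicator (fun _ => (1:ℝ)) x.2) ω
    - (M : ℝ) * (θn.2.1 - θn.1) ^ 2 *
      empAvg M Xr (fun x =>
        (Ioc θn.2.2 (θn.2.2 + h.2.2 / M)).indicator (fun _ => (1:ℝ)) x.2) ω)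

def remainderSummand (M : ℝ) (θ h : ℝ × ℝ × ℝ) (x : ℝ × ℝ) : ℝ :=
  2 * h.1 * √M * (epstil θ x * (Iic θ.2.2).indicator (fun _ => (1:ℝ)) x.2)
  - h.1 ^ 2 * (Iic θ.2.2).indicator (fun _ => (1:ℝ)) x.2
  + (2 * h.2.1 * √M * (epstil θ x * (Ioi θ.2.2).indicator (fun _ => (1:ℝ)) x.2)
  - h.2.1 ^ 2 * (Ioi θ.2.2).indicator (fun _ => (1:ℝ)) x.2)
  + (-(2 * M * (θ.1 - θ.2.1)) * (epstil θ x *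
      (Ioc (θ.2.2 + h.2.2 / M) θ.2.2).indicator (fun _ => (1:ℝ)) x.2)
  - M * (θ.1 - θ.2.1) ^ 2 * (Ioc (θ.2.2 + h.2.2 / M) θ.2.2).indicator (fun _ => (1:ℝ)) x.2)
  + (-(2 * M * (θ.2.1 - θ.1)) * (epstil θ x *
      (Ioc θ.2.2 (θ.2.2 + h.2.2 / M)).indicator (fun _ => (1:ℝ)) x.2)
  - M * (θ.2.1 - θ.1) ^ 2 * (Ioc θ.2.2 (θ.2.2 + h.2.2 / M)).indicator (fun _ => (1:ℝ)) x.2)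
  - M * (mfn (θ.1 + h.1 / √M, θ.2.1 + h.2.1 / √M, θ.2.2 + h.2.2 / M) x - mfn θ x)

theorem Estar_sub_Ehat_eq_empAvg {Ω : Type} (M : ℕ) (X : ℕ → Ω → ℝ × ℝ) (θ h : ℝ × ℝ × ℝ)
    (ω : Ω) :
    Estar M X θ h ω - Ehat M X θ h ω = empAvg M X (remainderSummand M θ h) ω := by
  simp only [Estar, Ehat, empAvg, remainderSummand, Finset.sum_add_distrib,
    Finset.sum_sub_distrib, ← Finset.mul_sum]
  ring

theorem remainderSummand_sq_eq {s : ℝ} (hs : 0 < s) (α β ζ u v w y z : ℝ) :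
    remainderSummand (s ^ 2) (α, β, ζ) (u, v, w) (y, z) =
      if z ≤ ζ then
        if z ≤ ζ + w / s ^ 2 then 0
        else 2 * s * (y - α) * (u - v) + (v ^ 2 - u ^ 2) - 2 * s * (α - β) * v
      else
        if z ≤ ζ + w / s ^ 2 then 2 * s * (y - β) * (v - u) + (u ^ 2 - v ^ 2) - 2 * s * (β - α) * u
        else 0 := by
  simp only [remainderSummand, mfn, epstil, Real.sqrt_sq hs.le, indicator_apply, mem_Iic, mem_Ioi,
    mem_Ioc]
  split_ifs <;> first | (field_simp; ring1) | grind

theorem abs_strip_remainder_le {s e d u v A B : ℝ} (hs : 1 ≤ s) (hu : |u| ≤ B) (hv : |v| ≤ B)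
    (hd : |d| ≤ 2 * A) :
    |2 * s * e * (u - v) + (v ^ 2 - u ^ 2) - 2 * s * d * v| ≤
      s * (4 * B * |e| + (2 * B ^ 2 + 4 * A * B)) := by
  have hs0 : 0 ≤ s := zero_le_one.trans hs
  have hA : 0 ≤ 2 * A := (abs_nonneg d).trans hd
  have huv : |u - v| ≤ 2 * B := (abs_sub _ _).trans (by linarith)
  have hsq : |v ^ 2 - u ^ 2| ≤ 2 * B ^ 2 := by
    rw [abs_le] at hu hv ⊢
    constructor <;> nlinarith
  calc |2 * s * e * (u - v) + (v ^ 2 - u ^ 2) - 2 * s * d * v|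
      ≤ 2 * s * |e| * |u - v| + |v ^ 2 - u ^ 2| + 2 * s * |d| * |v| := by
        refine (abs_sub _ _).trans (add_le_add ((abs_add_le _ _).trans (le_of_eq ?_)) ?_)
        · simp [abs_mul, abs_of_nonneg hs0]
        · simp [abs_mul, abs_of_nonneg hs0]
    _ ≤ 2 * s * |e| * (2 * B) + 2 * B ^ 2 + 2 * s * (2 * A) * B := by
        gcongr
    _ ≤ s * (4 * B * |e| + (2 * B ^ 2 + 4 * A * B)) := by
        nlinarith [sq_nonneg B]

def stripEnvelope (M c₁ c₂ r : ℝ) (θ : ℝ × ℝ × ℝ) (x : ℝ × ℝ) : ℝ :=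
  √M * ((c₁ * |epstil θ x| + c₂) * (Ioc (θ.2.2 - r) (θ.2.2 + r)).indicator (fun _ => (1:ℝ)) x.2)

theorem stripEnvelope_nonneg {M c₁ c₂ : ℝ} (hc₁ : 0 ≤ c₁) (hc₂ : 0 ≤ c₂) (r : ℝ)
    (θ : ℝ × ℝ × ℝ) : 0 ≤ stripEnvelope M c₁ c₂ r θ := fun x => by
  have : 0 ≤ (Ioc (θ.2.2 - r) (θ.2.2 + r)).indicator (fun _ => (1:ℝ)) x.2 :=
    indicator_nonneg (fun _ _ => zero_le_one) _
  unfold stripEnvelope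
  positivity

theorem abs_remainderSummand_le {M A B : ℝ} (hM : 1 ≤ M) {θ h : ℝ × ℝ × ℝ} (hh : ‖h‖ ≤ B)
    (hα : |θ.1| ≤ A) (hβ : |θ.2.1| ≤ A) (x : ℝ × ℝ) :
    |remainderSummand M θ h x| ≤
      stripEnvelope M (4 * B) (2 * B ^ 2 + 4 * A * B) (B / M) θ x := by
  obtain ⟨s, hs, rfl⟩ : ∃ s, 1 ≤ s ∧ M = s ^ 2 :=
    ⟨√M, Real.one_le_sqrt.mpr hM, (Real.sq_sqrt (by linarith)).symm⟩
  obtain ⟨α, β, ζ⟩ := θ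
  obtain ⟨u, v, w⟩ := h
  obtain ⟨y, z⟩ := x
  have hs0 : 0 < s := zero_lt_one.trans_le hs
  have hu : |u| ≤ B := (norm_fst_le _).trans hh
  have hv : |v| ≤ B := ((norm_fst_le _).trans (norm_snd_le _)).trans hh
  have hw : |w| ≤ B := ((norm_snd_le _).trans (norm_snd_le _)).trans hh
  have hshift : |w / s ^ 2| ≤ B / s ^ 2 := by
    rw [abs_div, abs_of_pos (by positivity : 0 < s ^ 2)]
    gcongr
  rw [abs_le] at hshift
  have hB : 0 ≤ B := (norm_nonneg _).trans hh
  have hA : 0 ≤ A := (abs_nonneg _).trans hα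
  have henv_nonneg := stripEnvelope_nonneg (M := s ^ 2) (by positivity : 0 ≤ 4 * B)
    (by positivity : 0 ≤ 2 * B ^ 2 + 4 * A * B) (B / s ^ 2) (α, β, ζ) (y, z)
  simp only [stripEnvelope, Real.sqrt_sq hs0.le, Pi.zero_apply] at hα hβ henv_nonneg ⊢
  rw [remainderSummand_sq_eq hs0]
  split_ifs with hz hz' hz'
  · rwa [abs_zero]
  · have hstrip : z ∈ Ioc (ζ - B / s ^ 2) (ζ + B / s ^ 2) := ⟨by linarith, by linarith⟩
    rw [indicator_of_mem hstrip]
    simpa [epstil, hz] using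
      abs_strip_remainder_le hs hu hv ((abs_sub _ _).trans (by linarith) : |α - β| ≤ 2 * A)
  · have hstrip : z ∈ Ioc (ζ - B / s ^ 2) (ζ + B / s ^ 2) := ⟨by linarith, by linarith⟩
    rw [indicator_of_mem hstrip]
    simpa [epstil, hz] using
      abs_strip_remainder_le hs hv hu ((abs_sub _ _).trans (by linarith) : |β - α| ≤ 2 * A)
  · rwa [abs_zero]

section EmpiricalAverage

variable {Ω : Type} {M : ℕ} {X : ℕ → Ω → ℝ × ℝ} {g : ℝ × ℝ → ℝ}

theorem empAvg_nonneg (hg : 0 ≤ g) (ω : Ω) : 0 ≤ empAvg M X g ω :=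
  mul_nonneg (by positivity) (Finset.sum_nonneg fun k _ => hg _)

theorem abs_empAvg_le {f : ℝ × ℝ → ℝ} (hfg : ∀ x, |f x| ≤ g x) (ω : Ω) :
    |empAvg M X f ω| ≤ empAvg M X g ω := by
  rw [empAvg, empAvg, abs_mul, abs_of_nonneg (by positivity)]
  gcongr
  exact (Finset.abs_sum_le_sum_abs _ _).trans (Finset.sum_le_sum fun k _ => hfg _)

variable [MeasurableSpace Ω] {P : Measure Ω} {Q : Measure (ℝ × ℝ)}

theorem integrable_comp_of_map_eq {k : ℕ} (hX : AEMeasurable (X k) P) (hlaw : P.map (X k) = Q)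
    (hg : Integrable g Q) : Integrable (fun ω => g (X k ω)) P := by
  subst hlaw
  exact (integrable_map_measure hg.aestronglyMeasurable hX).mp hg

theorem integrable_empAvg (hX : ∀ k < M, AEMeasurable (X k) P)
    (hlaw : ∀ k < M, P.map (X k) = Q) (hg : Integrable g Q) :
    Integrable (empAvg M X g) P :=
  (integrable_finsetSum _ fun k hk =>
    integrable_comp_of_map_eq (hX k (Finset.mem_range.mp hk)) (hlaw k (Finset.mem_range.mp hk))
      hg).const_mul _

theorem integral_comp_of_map_eq {k : ℕ} (hX : AEMeasurable (X k) P) (hlaw : P.map (X k) = Q)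
    (hg : Integrable g Q) : ∫ ω, g (X k ω) ∂P = ∫ x, g x ∂Q := by
  subst hlaw
  exact (integral_map hX hg.aestronglyMeasurable).symm

theorem integral_empAvg (hM : 0 < M) (hX : ∀ k < M, AEMeasurable (X k) P)
    (hlaw : ∀ k < M, P.map (X k) = Q) (hg : Integrable g Q) :
    ∫ ω, empAvg M X g ω ∂P = ∫ x, g x ∂Q := by
  have hint : ∀ k ∈ Finset.range M, Integrable (fun ω => g (X k ω)) P := fun k hk =>
    integrable_comp_of_map_eq (hX k (Finset.mem_range.mp hk)) (hlaw k (Finset.mem_range.mp hk)) hg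
  have hterm : ∀ k ∈ Finset.range M, ∫ ω, g (X k ω) ∂P = ∫ x, g x ∂Q := fun k hk =>
    integral_comp_of_map_eq (hX k (Finset.mem_range.mp hk)) (hlaw k (Finset.mem_range.mp hk)) hg
  simp only [empAvg]
  rw [integral_const_mul, integral_finsetSum _ hint, Finset.sum_congr rfl hterm,
    Finset.sum_const, Finset.card_range, nsmul_eq_mul, ← mul_assoc,
    inv_mul_cancel₀ (by exact_mod_cast hM.ne'), one_mul]

end EmpiricalAverage

theorem measure_ge_le_ofReal_integral_div {α : Type*} [MeasurableSpace α] {μ : Measure α}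
    {f : α → ℝ} (hf : Integrable f μ) (hf0 : 0 ≤ᵐ[μ] f) {ε : ℝ} (hε : 0 < ε) :
    μ {x | ε ≤ f x} ≤ ENNReal.ofReal ((∫ x, f x ∂μ) / ε) := by
  calc μ {x | ε ≤ f x} ≤ μ {x | ENNReal.ofReal ε ≤ ENNReal.ofReal (f x)} :=
        measure_mono fun x hx => ENNReal.ofReal_le_ofReal hx
    _ ≤ (∫⁻ x, ENNReal.ofReal (f x) ∂μ) / ENNReal.ofReal ε :=
        meas_ge_le_lintegral_div hf.aemeasurable.ennreal_ofReal
          (ENNReal.ofReal_pos.mpr hε).ne' ENNReal.ofReal_ne_top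
    _ = ENNReal.ofReal ((∫ x, f x ∂μ) / ε) := by
        rw [← ofReal_integral_eq_lintegral_ofReal hf hf0, ENNReal.ofReal_div_of_pos hε]

section Envelope

variable {Q : Measure (ℝ × ℝ)} [IsFiniteMeasure Q]

theorem integrable_epstil (hQ : Integrable (fun p : ℝ × ℝ => p.1 ^ 2) Q) (θ : ℝ × ℝ × ℝ) :
    Integrable (epstil θ) Q := by
  have hfst : Integrable (fun p : ℝ × ℝ => p.1) Q :=
    ((memLp_two_iff_integrable_sq measurable_fst.aestronglyMeasurable).mpr hQ).integrable
      one_le_two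
  refine hfst.sub (Integrable.of_bound (Measurable.ite (measurableSet_le measurable_snd
    measurable_const) measurable_const measurable_const).aestronglyMeasurable (|θ.1| + |θ.2.1|)
    (ae_of_all _ fun x => ?_))
  split_ifs <;> simp

theorem integrable_indicator_snd {S : Set ℝ} (hS : MeasurableSet S) :
    Integrable (fun p : ℝ × ℝ => S.indicator (fun _ => (1:ℝ)) p.2) Q :=
  (integrable_const (1:ℝ)).indicator (measurable_snd hS)

theorem integrable_abs_epstil_mul_indicator (hQ : Integrable (fun p : ℝ × ℝ => p.1 ^ 2) Q)
    (θ : ℝ × ℝ × ℝ) {S : Set ℝ} (hS : MeasurableSet S) :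
    Integrable (fun p : ℝ × ℝ => |epstil θ p| * S.indicator (fun _ => (1:ℝ)) p.2) Q :=
  (integrable_epstil hQ θ).abs.mul_bdd (integrable_indicator_snd hS).aestronglyMeasurable
    (ae_of_all _ fun _ => (norm_indicator_le_norm_self _ _).trans_eq norm_one)

theorem stripEnvelope_eq (M c₁ c₂ r : ℝ) (θ : ℝ × ℝ × ℝ) :
    stripEnvelope M c₁ c₂ r θ = fun x =>
      (√M * c₁) * (|epstil θ x| * (Ioc (θ.2.2 - r) (θ.2.2 + r)).indicator (fun _ => (1:ℝ)) x.2)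
        + (√M * c₂) * (Ioc (θ.2.2 - r) (θ.2.2 + r)).indicator (fun _ => (1:ℝ)) x.2 := by
  funext x
  simp only [stripEnvelope]
  ring

theorem integrable_stripEnvelope (hQ : Integrable (fun p : ℝ × ℝ => p.1 ^ 2) Q)
    (M c₁ c₂ r : ℝ) (θ : ℝ × ℝ × ℝ) : Integrable (stripEnvelope M c₁ c₂ r θ) Q := by
  rw [stripEnvelope_eq]
  exact ((integrable_abs_epstil_mul_indicator hQ θ measurableSet_Ioc).const_mul _).add
    ((integrable_indicator_snd measurableSet_Ioc).const_mul _)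

theorem integral_stripEnvelope (hQ : Integrable (fun p : ℝ × ℝ => p.1 ^ 2) Q)
    (M c₁ c₂ r : ℝ) (θ : ℝ × ℝ × ℝ) :
    ∫ x, stripEnvelope M c₁ c₂ r θ x ∂Q =
      c₁ * (√M * ∫ p, |epstil θ p| *
        (Ioc (θ.2.2 - r) (θ.2.2 + r)).indicator (fun _ => (1:ℝ)) p.2 ∂Q) +
      c₂ * (√M * ∫ p, (Ioc (θ.2.2 - r) (θ.2.2 + r)).indicator (fun _ => (1:ℝ)) p.2 ∂Q) := by
  rw [stripEnvelope_eq, integral_add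
      ((integrable_abs_epstil_mul_indicator hQ θ measurableSet_Ioc).const_mul _)
      ((integrable_indicator_snd measurableSet_Ioc).const_mul _),
    integral_const_mul, integral_const_mul]
  ring

end Envelope

theorem measure_le_iSup_abs_Estar_sub_Ehat_le {Ω : Type} [MeasurableSpace Ω] {P : Measure Ω}
    {Q : Measure (ℝ × ℝ)} [IsFiniteMeasure Q] (hQ : Integrable (fun p : ℝ × ℝ => p.1 ^ 2) Q)
    {M : ℕ} (hM : 1 ≤ M) {X : ℕ → Ω → ℝ × ℝ} (hX : ∀ k < M, AEMeasurable (X k) P)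
    (hlaw : ∀ k < M, P.map (X k) = Q) {θ : ℝ × ℝ × ℝ} {A B : ℝ} (hα : |θ.1| ≤ A)
    (hβ : |θ.2.1| ≤ A) (hB : 0 ≤ B) {K : Set (ℝ × ℝ × ℝ)} (hK : ∀ h ∈ K, ‖h‖ ≤ B) {ε : ℝ}
    (hε : 0 < ε) :
    P {ω | ε ≤ ⨆ h ∈ K, |Estar M X θ h ω - Ehat M X θ h ω|} ≤
      ENNReal.ofReal
        ((∫ x, stripEnvelope M (4 * B) (2 * B ^ 2 + 4 * A * B) (B / M) θ x ∂Q) / ε) := by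
  have hA : 0 ≤ A := (abs_nonneg _).trans hα
  have hg0 := stripEnvelope_nonneg (M := M) (by positivity : 0 ≤ 4 * B)
    (by positivity : 0 ≤ 2 * B ^ 2 + 4 * A * B) (B / M) θ
  have hg := integrable_stripEnvelope hQ M (4 * B) (2 * B ^ 2 + 4 * A * B) (B / M) θ
  have hsup : ∀ ω, ⨆ h ∈ K, |Estar M X θ h ω - Ehat M X θ h ω| ≤
      empAvg M X (stripEnvelope M (4 * B) (2 * B ^ 2 + 4 * A * B) (B / M) θ) ω := fun ω =>
    Real.iSup_le (fun h => Real.iSup_le (fun hh => by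
        rw [Estar_sub_Ehat_eq_empAvg]
        exact abs_empAvg_le (abs_remainderSummand_le (by exact_mod_cast hM) (hK h hh) hα hβ) ω)
      (empAvg_nonneg hg0 ω)) (empAvg_nonneg hg0 ω)
  calc P {ω | ε ≤ ⨆ h ∈ K, |Estar M X θ h ω - Ehat M X θ h ω|}
      ≤ P {ω | ε ≤ empAvg M X (stripEnvelope M (4 * B) (2 * B ^ 2 + 4 * A * B) (B / M) θ) ω} :=
        measure_mono fun ω hω => le_trans hω (hsup ω)
    _ ≤ _ := by
        rw [← integral_empAvg hM hX hlaw hg]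
        exact measure_ge_le_ofReal_integral_div (integrable_empAvg hX hlaw hg)
          (ae_of_all _ (empAvg_nonneg hg0)) hε

theorem stmt2_general
    {Ω : Type} [MeasurableSpace Ω] (P : Measure Ω)
    -- model parameters
    (α₀ β₀ ζ₀ : ℝ)
    -- triangular array
    (m : ℕ → ℕ) (hm1 : ∀ n, 1 ≤ m n)
    (Q : ℕ → Measure (ℝ × ℝ)) (hQprob : ∀ n, IsProbabilityMeasure (Q n))
    (hQy2 : ∀ n, Integrable (fun p : ℝ × ℝ => p.1 ^ 2) (Q n))
    (X : ℕ → ℕ → Ω → ℝ × ℝ) (hXmeas : ∀ n k, Measurable (X n k))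
    (hXlaw : ∀ n k, k < m n → Measure.map (X n k) P = Q n)
    (θseq : ℕ → ℝ × ℝ × ℝ)
    -- condition (IV): `θ_n → θ₀`
    (hIV : Tendsto θseq atTop (nhds (α₀, β₀, ζ₀)))
    -- conditions (3.4) and (3.5): for all `δ, η > 0`,
    -- `√m_n·Q_n(|ε̃_n|^p·1{ζ_n−δ/m_n < Z ≤ ζ_n+η/m_n}) → 0` for `p = 1, 2`, and
    -- `√m_n·Q_n(1{ζ_n−δ/m_n < Z ≤ ζ_n+η/m_n}) → 0`
    (hvanish : ∀ δ > (0 : ℝ), ∀ η > (0 : ℝ),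
      Tendsto (fun n => Real.sqrt (m n) *
        ∫ p : ℝ × ℝ, |epstil (θseq n) p| *
          (Ioc ((θseq n).2.2 - δ / m n) ((θseq n).2.2 + η / m n)).indicator
            (fun _ => (1 : ℝ)) p.2 ∂(Q n)) atTop (nhds 0) ∧
      Tendsto (fun n => Real.sqrt (m n) *
        ∫ p : ℝ × ℝ, |epstil (θseq n) p| ^ 2 *
          (Ioc ((θseq n).2.2 - δ / m n) ((θseq n).2.2 + η / m n)).indicator
            (fun _ => (1 : ℝ)) p.2 ∂(Q n)) atTop (nhds 0) ∧
      Tendsto (fun n => Real.sqrt (m n) *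
        ∫ p : ℝ × ℝ,
          (Ioc ((θseq n).2.2 - δ / m n) ((θseq n).2.2 + η / m n)).indicator
            (fun _ => (1 : ℝ)) p.2 ∂(Q n)) atTop (nhds 0)) :
    -- conclusion: for every compact rectangle `K = Icc lo hi ⊆ ℝ³`,
    -- `sup_{h ∈ K} |E*_n(h) − Ê_n(h)| → 0` in probability
    ∀ lo hi : ℝ × ℝ × ℝ, ∀ ε > (0 : ℝ),
      Tendsto (fun n => P {ω | ε ≤ ⨆ h ∈ Icc lo hi,
        |Estar (m n) (X n) (θseq n) h ω - Ehat (m n) (X n) (θseq n) h ω|})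
        atTop (nhds 0) := by
  intro lo hi ε hε
  obtain ⟨B, hB, hK⟩ := (isCompact_Icc (a := lo) (b := hi)).isBounded.exists_pos_norm_le
  obtain ⟨hv1, -, hv3⟩ := hvanish B hB B hB
  set A := ‖(α₀, β₀, ζ₀)‖ + 1
  have hθbd : ∀ᶠ n in atTop, ‖θseq n‖ < A := hIV.norm.eventually_lt_const (lt_add_one _)
  have hR : Tendsto (fun n => ∫ x, stripEnvelope (m n) (4 * B) (2 * B ^ 2 + 4 * A * B)
      (B / m n) (θseq n) x ∂(Q n)) atTop (nhds 0) := by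
    have h := (hv1.const_mul (4 * B)).add (hv3.const_mul (2 * B ^ 2 + 4 * A * B))
    rw [mul_zero, mul_zero, add_zero] at h
    refine h.congr fun n => ?_
    have := hQprob n
    rw [integral_stripEnvelope (hQy2 n)]
  refine tendsto_of_tendsto_of_tendsto_of_le_of_le' tendsto_const_nhds
    (by simpa using ENNReal.tendsto_ofReal (hR.div_const ε))
    (Eventually.of_forall fun _ => zero_le) ?_
  filter_upwards [hθbd] with n hθ
  have := hQprob n
  exact measure_le_iSup_abs_Estar_sub_Ehat_le (hQy2 n) (hm1 n)
    (fun k _ => (hXmeas n k).aemeasurable) (hXlaw n)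
    ((norm_fst_le _).trans hθ.le) (((norm_fst_le _).trans (norm_snd_le _)).trans hθ.le)
    hB.le hK hε

/-- Lemma 3.3: under (I)–(IV) and the vanishing conditions (3.4)–(3.5),
`sup_{h ∈ K} |E*_n(h) − Ê_n(h)| → 0` in probability for every compact rectangle
`K ⊆ ℝ³`. -/
theorem stmt2
    {Ω : Type} [MeasurableSpace Ω] (P : Measure Ω) [IsProbabilityMeasure P]
    -- model parameters
    (α₀ β₀ a b ζ₀ σ2 Mbd : ℝ) (f : ℝ → ℝ)
    (νZ νε : Measure ℝ) [IsProbabilityMeasure νZ] [IsProbabilityMeasure νε]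
    (ℙd : Measure (ℝ × ℝ))
    (hab : a < b) (hζ₀ : ζ₀ ∈ Icc a b) (hαβ : α₀ ≠ β₀)
    -- `Z` has a bounded density `f`, positive on `[a,b]`, bounded away from `0` near `ζ₀`
    (hνZ : νZ = volume.withDensity (fun z => ENNReal.ofReal (f z)))
    (hfbd : ∃ C, ∀ z, f z ≤ C)
    (hfpos : ∀ z ∈ Icc a b, 0 < f z)
    (hfloc : ∃ η₀ > (0 : ℝ), ∃ κ > (0 : ℝ), ∀ z, |z - ζ₀| ≤ η₀ → κ < f z)
    (hZa : 0 < νZ (Iio a)) (hZb : 0 < νZ (Ioi b))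
    -- `ε` has a continuous distribution, mean `0`, variance `σ² > 0`, finite third moment
    (hεcont : ∀ x : ℝ, νε {x} = 0)
    (hεmean : ∫ x, x ∂νε = 0)
    (hεL2 : Integrable (fun x => x ^ 2) νε)
    (hεvar : ∫ x, x ^ 2 ∂νε = σ2) (hσ : 0 < σ2)
    (hεL3 : Integrable (fun x => |x| ^ 3) νε)
    -- `ℙd` is the law of `(Y, Z)` with `Y = α₀·1{Z≤ζ₀} + β₀·1{Z>ζ₀} + ε`, `ε ⟂ Z`
    (hℙd : ℙd = Measure.map
      (fun p : ℝ × ℝ => ((if p.1 ≤ ζ₀ then α₀ else β₀) + p.2, p.1)) (νZ.prod νε))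
    -- triangular array
    (m : ℕ → ℕ) (hm1 : ∀ n, 1 ≤ m n) (hmono : Monotone m)
    (hminf : Tendsto m atTop atTop)
    (Q : ℕ → Measure (ℝ × ℝ)) (hQprob : ∀ n, IsProbabilityMeasure (Q n))
    (hQy2 : ∀ n, Integrable (fun p : ℝ × ℝ => p.1 ^ 2) (Q n))
    (X : ℕ → ℕ → Ω → ℝ × ℝ) (hXmeas : ∀ n k, Measurable (X n k))
    (hXlaw : ∀ n k, k < m n → Measure.map (X n k) P = Q n)
    (hXindep : ∀ n, ProbabilityTheory.iIndepFun (X n) P)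
    -- `θ_n` maximizes `θ ↦ Q_n(m_θ)` over `Θ = ℝ² × [a,b]`
    (θseq : ℕ → ℝ × ℝ × ℝ)
    (hθmem : ∀ n, (θseq n).2.2 ∈ Icc a b)
    (hθmax : ∀ n, ∀ θ : ℝ × ℝ × ℝ, θ.2.2 ∈ Icc a b →
      ∫ x, mfn θ x ∂(Q n) ≤ ∫ x, mfn (θseq n) x ∂(Q n))
    (hMbd : ∀ n, |(θseq n).1| ≤ Mbd)
    -- condition (I): `‖Q_n − ℙ‖_ℱ → 0`
    (hI : ∀ ε > (0 : ℝ), ∃ N, ∀ n ≥ N, ∀ I : Set ℝ, I.OrdConnected →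
      |∫ p : ℝ × ℝ, I.indicator (fun _ => (1 : ℝ)) p.2 ∂(Q n)
        - ∫ p : ℝ × ℝ, I.indicator (fun _ => (1 : ℝ)) p.2 ∂ℙd| < ε)
    -- condition (II): `‖Q_n − ℙ‖_𝒢 → 0`
    (hII : ∀ ε > (0 : ℝ), ∃ N, ∀ n ≥ N,
      (∀ I : Set ℝ, I.OrdConnected →
        |∫ p : ℝ × ℝ, p.1 * I.indicator (fun _ => (1 : ℝ)) p.2 ∂(Q n)
          - ∫ p : ℝ × ℝ, p.1 * I.indicator (fun _ => (1 : ℝ)) p.2 ∂ℙd| < ε) ∧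
      (∀ I : Set ℝ, I.OrdConnected → ∀ α : ℝ, |α| ≤ Mbd →
        |∫ p : ℝ × ℝ, |p.1 + α| * I.indicator (fun _ => (1 : ℝ)) p.2 ∂(Q n)
          - ∫ p : ℝ × ℝ, |p.1 + α| * I.indicator (fun _ => (1 : ℝ)) p.2 ∂ℙd| < ε))
    -- condition (III): `‖Q_n − ℙ‖_ℋ → 0`
    (hIII : ∀ ε > (0 : ℝ), ∃ N, ∀ n ≥ N, ∀ I : Set ℝ, I.OrdConnected →
      |∫ p : ℝ × ℝ, p.1 ^ 2 * I.indicator (fun _ => (1 : ℝ)) p.2 ∂(Q n)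
        - ∫ p : ℝ × ℝ, p.1 ^ 2 * I.indicator (fun _ => (1 : ℝ)) p.2 ∂ℙd| < ε)
    -- condition (IV): `θ_n → θ₀`
    (hIV : Tendsto θseq atTop (nhds (α₀, β₀, ζ₀)))
    -- conditions (3.4) and (3.5): for all `δ, η > 0`,
    -- `√m_n·Q_n(|ε̃_n|^p·1{ζ_n−δ/m_n < Z ≤ ζ_n+η/m_n}) → 0` for `p = 1, 2`, and
    -- `√m_n·Q_n(1{ζ_n−δ/m_n < Z ≤ ζ_n+η/m_n}) → 0`
    (hvanish : ∀ δ > (0 : ℝ), ∀ η > (0 : ℝ),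
      Tendsto (fun n => Real.sqrt (m n) *
        ∫ p : ℝ × ℝ, |epstil (θseq n) p| *
          (Ioc ((θseq n).2.2 - δ / m n) ((θseq n).2.2 + η / m n)).indicator
            (fun _ => (1 : ℝ)) p.2 ∂(Q n)) atTop (nhds 0) ∧
      Tendsto (fun n => Real.sqrt (m n) *
        ∫ p : ℝ × ℝ, |epstil (θseq n) p| ^ 2 *
          (Ioc ((θseq n).2.2 - δ / m n) ((θseq n).2.2 + η / m n)).indicator
            (fun _ => (1 : ℝ)) p.2 ∂(Q n)) atTop (nhds 0) ∧
      Tendsto (fun n => Real.sqrt (m n) *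
        ∫ p : ℝ × ℝ,
          (Ioc ((θseq n).2.2 - δ / m n) ((θseq n).2.2 + η / m n)).indicator
            (fun _ => (1 : ℝ)) p.2 ∂(Q n)) atTop (nhds 0)) :
    -- conclusion: for every compact rectangle `K = Icc lo hi ⊆ ℝ³`,
    -- `sup_{h ∈ K} |E*_n(h) − Ê_n(h)| → 0` in probability
    ∀ lo hi : ℝ × ℝ × ℝ, ∀ ε > (0 : ℝ),
      Tendsto (fun n => P {ω | ε ≤ ⨆ h ∈ Icc lo hi,
        |Estar (m n) (X n) (θseq n) h ω - Ehat (m n) (X n) (θseq n) h ω|})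
        atTop (nhds 0) :=
  stmt2_general P α₀ β₀ ζ₀ m hm1 Q hQprob hQy2 X hXmeas hXlaw θseq hIV hvanish

end
end

section
/- For every compact rectangle K ⊂ Θ, sup_{θ∈K} |M_n(θ) − M(θ)| → 0 almost surely as n → ∞. (Lemma 4.1(i): uniform almost-sure convergence of the empirical criterion.) -/
open MeasureTheory Filter Set

noncomputable section

/-!
Expanding the square, `m_θ(y, z) = -y² + 2βy - β² + 1{z ≤ ζ}·(2(α - β)y - (α² - β²))`, so `M_n(θ)`
and `M(θ)` are the same combination, with coefficients continuous in `θ`, of the means of `y²`,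
`y`, `1`, `y·1{z ≤ ζ}` and `1{z ≤ ζ}`. The first three converge a.s. by the strong law. For the
last two, after splitting `y = y⁺ - y⁻`, the empirical means are monotone in `ζ`; the strong law
gives a.s. convergence at all rational `ζ` at once, the limits are continuous in `ζ` because `Z`
has no atoms, and Pólya's argument turns this into locally uniform convergence in `ζ`. Coefficients
bounded on compact sets then give uniform convergence on compact subsets of `Θ`.
-/

open Topology

theorem tendstoLocallyUniformly_of_monotone_of_forall_rat {ι : Type*} {p : Filter ι}
    {F : ι → ℝ → ℝ} {G : ℝ → ℝ} (hF : ∀ n, Monotone (F n)) (hG : Continuous G)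
    (h : ∀ q : ℚ, Tendsto (fun n => F n q) p (𝓝 (G q))) :
    TendstoLocallyUniformly F G p := by
  rw [Metric.tendstoLocallyUniformly_iff]
  intro ε hε x
  obtain ⟨δ, hδ, hGδ⟩ := Metric.continuous_iff.1 hG x (ε / 4) (by positivity)
  obtain ⟨q, hxq, hqx⟩ := exists_rat_btwn (show x - δ < x by linarith)
  obtain ⟨q', hxq', hq'x⟩ := exists_rat_btwn (show x < x + δ by linarith)
  have hG_near : ∀ y, x - δ < y → y < x + δ → |G y - G x| < ε / 4 := fun y h₁ h₂ =>
    hGδ y (by rw [Real.dist_eq, abs_lt]; constructor <;> linarith)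
  have hq := hG_near q hxq (by linarith)
  have hq' := hG_near q' (by linarith) hq'x
  refine ⟨Ioo q q', Ioo_mem_nhds hqx hxq', ?_⟩
  filter_upwards [h q (Metric.ball_mem_nhds _ (by positivity : 0 < ε / 4)),
    h q' (Metric.ball_mem_nhds _ (by positivity : 0 < ε / 4))] with n hn hn' y hy
  simp only [mem_preimage, Metric.mem_ball, Real.dist_eq] at hn hn'
  have hy' := hG_near y (by linarith [hy.1]) (by linarith [hy.2])
  have hlow := hF n hy.1.le
  have hup := hF n hy.2.le
  rw [Real.dist_eq]
  rw [abs_lt] at *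
  constructor <;> linarith

theorem TendstoUniformlyOn.mul_left_of_norm_le {ι α R : Type*} [SeminormedRing R]
    {p : Filter ι} {s : Set α} {F : ι → α → R} {G c : α → R} {C : ℝ}
    (hF : TendstoUniformlyOn F G p s) (hc : ∀ x ∈ s, ‖c x‖ ≤ C) :
    TendstoUniformlyOn (fun n x => c x * F n x) (fun x => c x * G x) p s := by
  rw [Metric.tendstoUniformlyOn_iff] at hF ⊢
  intro ε hε
  have hD : 0 < |C| + 1 := by positivity
  filter_upwards [hF (ε / (|C| + 1)) (by positivity)] with n hn x hx
  rw [dist_eq_norm, ← mul_sub]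
  calc ‖c x * (G x - F n x)‖ ≤ ‖c x‖ * ‖G x - F n x‖ := norm_mul_le _ _
    _ ≤ (|C| + 1) * ‖G x - F n x‖ := by
        gcongr; linarith [hc x hx, le_abs_self C]
    _ < (|C| + 1) * (ε / (|C| + 1)) := by
        gcongr; rw [← dist_eq_norm]; exact hn x hx
    _ = ε := by field_simp

section EmpiricalMean

variable {E : Type*} (x : ℕ → E)

def empiricalMean (g : E → ℝ) (n : ℕ) : ℝ :=
  (n : ℝ)⁻¹ * ∑ i ∈ Finset.range n, g (x i)

theorem empiricalMean_mono {g g' : E → ℝ} (h : g ≤ g') (n : ℕ) :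
    empiricalMean x g n ≤ empiricalMean x g' n := by
  unfold empiricalMean
  gcongr with i
  exact h _

theorem empiricalMean_sub (g g' : E → ℝ) (n : ℕ) :
    empiricalMean x (g - g') n = empiricalMean x g n - empiricalMean x g' n := by
  simp only [empiricalMean, Pi.sub_apply, Finset.sum_sub_distrib, mul_sub]

theorem tendsto_empiricalMean_const (c : ℝ) :
    Tendsto (empiricalMean x fun _ => c) atTop (𝓝 c) := by
  refine tendsto_const_nhds.congr' ?_
  filter_upwards [eventually_ne_atTop 0] with n hn
  simp [empiricalMean, hn]

end EmpiricalMean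

theorem continuous_setIntegral_setOf_le {E : Type*} [MeasurableSpace E] {μ : Measure E}
    {z w : E → ℝ} (hz : Measurable z) (hw : Integrable w μ)
    (hatom : ∀ t, μ {x | z x = t} = 0) :
    Continuous fun t => ∫ x in {x | z x ≤ t}, w x ∂μ := by
  have hmeas : ∀ t, MeasurableSet {x | z x ≤ t} := fun t => measurableSet_le hz measurable_const
  simp_rw [← integral_indicator (hmeas _)]
  refine continuous_iff_continuousAt.2 fun t₀ => continuousAt_of_dominated
    (bound := fun x => ‖w x‖) (.of_forall fun t => hw.1.indicator (hmeas t))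
    (.of_forall fun t => .of_forall fun x => norm_indicator_le_norm_self w x) hw.norm ?_
  have hne : ∀ᵐ x ∂μ, z x ≠ t₀ := measure_eq_zero_iff_ae_notMem.1 (hatom t₀)
  filter_upwards [hne] with x hx
  have hloc : ∀ᶠ t in 𝓝 t₀, (z x ≤ t ↔ z x ≤ t₀) := by
    rcases hx.lt_or_gt with h | h
    · filter_upwards [Ioi_mem_nhds h] with t ht using iff_of_true ht.le h.le
    · filter_upwards [Iio_mem_nhds h] with t ht using iff_of_false ht.not_ge h.not_ge
  refine ContinuousAt.congr (f := fun _ => {y | z y ≤ t₀}.indicator w x) continuousAt_const ?_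
  filter_upwards [hloc] with t ht
  simp only [indicator, mem_ofPred_eq, ht]

section StrongLaw

variable {Ω E : Type*} [MeasurableSpace Ω] [MeasurableSpace E] {P : Measure Ω}
  {μ : Measure E} {X : ℕ → Ω → E}

theorem ae_tendsto_empiricalMean (hX : ∀ i, Measurable (X i))
    (hlaw : ∀ i, Measure.map (X i) P = μ) (hindep : ProbabilityTheory.iIndepFun X P)
    {g : E → ℝ} (hg : Measurable g) (hgμ : Integrable g μ) :
    ∀ᵐ ω ∂P, Tendsto (empiricalMean (X · ω) g) atTop (𝓝 (∫ x, g x ∂μ)) := by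
  have hint : Integrable (g ∘ X 0) P := by
    rw [← hlaw 0] at hgμ
    exact hgμ.comp_measurable (hX 0)
  have hident : ∀ i, ProbabilityTheory.IdentDistrib (g ∘ X i) (g ∘ X 0) P P := fun i =>
    ⟨(hg.comp (hX i)).aemeasurable, (hg.comp (hX 0)).aemeasurable, by
      rw [← Measure.map_map hg (hX i), ← Measure.map_map hg (hX 0), hlaw i, hlaw 0]⟩
  have hmean : ∫ ω, g (X 0 ω) ∂P = ∫ x, g x ∂μ := by
    rw [← hlaw 0, integral_map (hX 0).aemeasurable hg.aestronglyMeasurable]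
  filter_upwards [ProbabilityTheory.strong_law_ae (fun i => g ∘ X i) hint
    (fun i j hij => (hindep.indepFun hij).comp hg hg) hident] with ω hω
  rw [Function.comp_def, hmean] at hω
  exact hω

theorem ae_tendstoLocallyUniformly_empiricalMean_indicator_of_nonneg
    (hX : ∀ i, Measurable (X i)) (hlaw : ∀ i, Measure.map (X i) P = μ)
    (hindep : ProbabilityTheory.iIndepFun X P) {z w : E → ℝ} (hz : Measurable z)
    (hatom : ∀ t, μ {x | z x = t} = 0) (hw : Measurable w) (hwμ : Integrable w μ)
    (hw0 : 0 ≤ w) :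
    ∀ᵐ ω ∂P, TendstoLocallyUniformly
      (fun n t => empiricalMean (X · ω) ({x | z x ≤ t}.indicator w) n)
      (fun t => ∫ x in {x | z x ≤ t}, w x ∂μ) atTop := by
  have hmeas : ∀ t, MeasurableSet {x | z x ≤ t} := fun t => measurableSet_le hz measurable_const
  have hrat : ∀ᵐ ω ∂P, ∀ q : ℚ, Tendsto (empiricalMean (X · ω) ({x | z x ≤ q}.indicator w))
      atTop (𝓝 (∫ x in {x | z x ≤ q}, w x ∂μ)) := by
    refine ae_all_iff.2 fun q => ?_
    rw [← integral_indicator (hmeas q)]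
    exact ae_tendsto_empiricalMean hX hlaw hindep (hw.indicator (hmeas q))
      (hwμ.indicator (hmeas q))
  filter_upwards [hrat] with ω hω
  refine tendstoLocallyUniformly_of_monotone_of_forall_rat (fun n t t' htt' => ?_)
    (continuous_setIntegral_setOf_le hz hwμ hatom) hω
  exact empiricalMean_mono _ (indicator_le_indicator_of_subset
    (fun x hx => le_trans (α := ℝ) hx htt') hw0) n

theorem ae_tendstoLocallyUniformly_empiricalMean_indicator
    (hX : ∀ i, Measurable (X i)) (hlaw : ∀ i, Measure.map (X i) P = μ)
    (hindep : ProbabilityTheory.iIndepFun X P) {z w : E → ℝ} (hz : Measurable z)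
    (hatom : ∀ t, μ {x | z x = t} = 0) (hw : Measurable w) (hwμ : Integrable w μ) :
    ∀ᵐ ω ∂P, TendstoLocallyUniformly
      (fun n t => empiricalMean (X · ω) ({x | z x ≤ t}.indicator w) n)
      (fun t => ∫ x in {x | z x ≤ t}, w x ∂μ) atTop := by
  have hpos := ae_tendstoLocallyUniformly_empiricalMean_indicator_of_nonneg
    (w := fun x => max (w x) 0) hX hlaw hindep hz hatom (hw.max measurable_const) hwμ.pos_part
    fun x => le_max_right (w x) 0
  have hneg := ae_tendstoLocallyUniformly_empiricalMean_indicator_of_nonneg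
    (w := fun x => max (-w x) 0) hX hlaw hindep hz hatom (hw.neg.max measurable_const)
    hwμ.neg_part fun x => le_max_right (-w x) 0
  have hdecomp : w = (fun x => max (w x) 0) - fun x => max (-w x) 0 :=
    funext fun x => (max_zero_sub_max_neg_zero_eq_self (w x)).symm
  filter_upwards [hpos, hneg] with ω hω₁ hω₂
  refine (hω₁.sub hω₂).congr (fun n t => ?_) |>.congr_right fun t => ?_
  · conv_rhs => rw [hdecomp, indicator_sub', empiricalMean_sub]
    rfl
  · conv_rhs => rw [hdecomp]
    exact (integral_sub hwμ.pos_part.integrableOn hwμ.neg_part.integrableOn).symm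

end StrongLaw

-- Each summand is a coefficient continuous in `θ` times a statistic whose mean converges.
theorem mfn_eq (θ : ℝ × ℝ × ℝ) (p : ℝ × ℝ) :
    mfn θ p = -1 * p.1 ^ 2 + 2 * θ.2.1 * p.1 + -θ.2.1 ^ 2 * 1
      + 2 * (θ.1 - θ.2.1) * {p : ℝ × ℝ | p.2 ≤ θ.2.2}.indicator Prod.fst p
      + -(θ.1 ^ 2 - θ.2.1 ^ 2) * {p : ℝ × ℝ | p.2 ≤ θ.2.2}.indicator (fun _ => 1) p := by
  by_cases h : p.2 ≤ θ.2.2 <;> simp [mfn, indicator, h] <;> ring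

theorem empiricalMean_mfn (x : ℕ → ℝ × ℝ) (θ : ℝ × ℝ × ℝ) (n : ℕ) :
    empiricalMean x (mfn θ) n = -1 * empiricalMean x (fun p => p.1 ^ 2) n
      + 2 * θ.2.1 * empiricalMean x Prod.fst n + -θ.2.1 ^ 2 * empiricalMean x (fun _ => 1) n
      + 2 * (θ.1 - θ.2.1) * empiricalMean x ({p : ℝ × ℝ | p.2 ≤ θ.2.2}.indicator Prod.fst) n
      + -(θ.1 ^ 2 - θ.2.1 ^ 2)
        * empiricalMean x ({p : ℝ × ℝ | p.2 ≤ θ.2.2}.indicator (fun _ => 1)) n := by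
  simp only [empiricalMean, mfn_eq, Finset.sum_add_distrib, ← Finset.mul_sum]
  ring

theorem integral_mfn {ν : Measure (ℝ × ℝ)} [IsProbabilityMeasure ν] (hL2 : MemLp Prod.fst 2 ν)
    (θ : ℝ × ℝ × ℝ) :
    ∫ p, mfn θ p ∂ν = -1 * ∫ p, p.1 ^ 2 ∂ν + 2 * θ.2.1 * ∫ p, p.1 ∂ν + -θ.2.1 ^ 2 * 1
      + 2 * (θ.1 - θ.2.1) * ∫ p in {p : ℝ × ℝ | p.2 ≤ θ.2.2}, p.1 ∂ν
      + -(θ.1 ^ 2 - θ.2.1 ^ 2) * ∫ _ in {p : ℝ × ℝ | p.2 ≤ θ.2.2}, 1 ∂ν := by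
  have hS : MeasurableSet {p : ℝ × ℝ | p.2 ≤ θ.2.2} :=
    measurableSet_le measurable_snd measurable_const
  have h2 : Integrable (fun p : ℝ × ℝ => p.1 ^ 2) ν := hL2.integrable_sq
  have h1 : Integrable Prod.fst ν := hL2.integrable one_le_two
  have h3 : Integrable ({p : ℝ × ℝ | p.2 ≤ θ.2.2}.indicator Prod.fst) ν := h1.indicator hS
  have h4 : Integrable ({p : ℝ × ℝ | p.2 ≤ θ.2.2}.indicator (fun _ => (1 : ℝ))) ν :=
    (integrable_const (1 : ℝ)).indicator hS
  simp_rw [mfn_eq]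
  rw [integral_add (by fun_prop) (by fun_prop), integral_add (by fun_prop) (by fun_prop),
    integral_add (by fun_prop) (by fun_prop), integral_add (by fun_prop) (by fun_prop)]
  simp only [integral_const_mul, integral_indicator hS, integral_const, probReal_univ, one_smul]

theorem tendstoLocallyUniformly_empiricalMean_mfn {x : ℕ → ℝ × ℝ} {ν : Measure (ℝ × ℝ)}
    [IsProbabilityMeasure ν] (hL2 : MemLp Prod.fst 2 ν)
    (h2 : Tendsto (empiricalMean x fun p => p.1 ^ 2) atTop (𝓝 (∫ p, p.1 ^ 2 ∂ν)))
    (h1 : Tendsto (empiricalMean x Prod.fst) atTop (𝓝 (∫ p, p.1 ∂ν)))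
    (hU : TendstoLocallyUniformly
      (fun n t => empiricalMean x ({p : ℝ × ℝ | p.2 ≤ t}.indicator Prod.fst) n)
      (fun t => ∫ p in {p : ℝ × ℝ | p.2 ≤ t}, p.1 ∂ν) atTop)
    (hV : TendstoLocallyUniformly
      (fun n t => empiricalMean x ({p : ℝ × ℝ | p.2 ≤ t}.indicator (fun _ => 1)) n)
      (fun t => ∫ _ in {p : ℝ × ℝ | p.2 ≤ t}, 1 ∂ν) atTop) :
    TendstoLocallyUniformly (fun n θ => empiricalMean x (mfn θ) n) (fun θ => ∫ p, mfn θ p ∂ν)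
      atTop := by
  refine tendstoLocallyUniformly_iff_forall_isCompact.2 fun K hK => ?_
  have hcoef : ∀ {F : ℕ → ℝ × ℝ × ℝ → ℝ} {G : ℝ × ℝ × ℝ → ℝ} (c : ℝ × ℝ × ℝ → ℝ),
      Continuous c → TendstoUniformlyOn F G atTop K →
      TendstoUniformlyOn (fun n θ => c θ * F n θ) (fun θ => c θ * G θ) atTop K := fun c hc hF =>
    let ⟨_, hC⟩ := hK.exists_bound_of_continuousOn hc.continuousOn
    hF.mul_left_of_norm_le hC
  have hζ : ∀ {F : ℕ → ℝ → ℝ} {G : ℝ → ℝ}, TendstoLocallyUniformly F G atTop →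
      TendstoUniformlyOn (fun n θ => F n θ.2.2) (fun θ => G θ.2.2) atTop K := fun h =>
    tendstoLocallyUniformly_iff_forall_isCompact.1 (h.comp _ (by fun_prop)) K hK
  refine ((((((hcoef (fun _ => -1) continuous_const (h2.tendstoUniformlyOn_const K)).add
    (hcoef (fun θ => 2 * θ.2.1) (by fun_prop) (h1.tendstoUniformlyOn_const K))).add
    (hcoef (fun θ => -θ.2.1 ^ 2) (by fun_prop)
      ((tendsto_empiricalMean_const x 1).tendstoUniformlyOn_const K))).add
    (hcoef (fun θ => 2 * (θ.1 - θ.2.1)) (by fun_prop) (hζ hU))).add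
    (hcoef (fun θ => -(θ.1 ^ 2 - θ.2.1 ^ 2)) (by fun_prop) (hζ hV))).congr ?_).congr_right ?_
  · exact .of_forall fun n θ _ => (empiricalMean_mfn x θ n).symm
  · exact fun θ _ => (integral_mfn hL2 θ).symm

theorem memLp_fst_map_regression {νZ νε : Measure ℝ} [IsProbabilityMeasure νZ]
    [IsProbabilityMeasure νε] {s : ℝ → ℝ} (hs : Measurable s) (hsZ : MemLp s 2 νZ)
    (hε : MemLp id 2 νε) :
    MemLp Prod.fst 2 ((νZ.prod νε).map fun p => (s p.1 + p.2, p.1)) := by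
  rw [memLp_map_measure_iff measurable_fst.aestronglyMeasurable (by fun_prop)]
  exact (hsZ.comp_measurePreserving measurePreserving_fst).add
    (hε.comp_measurePreserving measurePreserving_snd)

theorem map_regression_setOf_snd_eq {νZ νε : Measure ℝ} [IsProbabilityMeasure νε] {s : ℝ → ℝ}
    (hs : Measurable s) (t : ℝ) :
    (νZ.prod νε).map (fun p => (s p.1 + p.2, p.1)) {p | p.2 = t} = νZ {t} := by
  rw [Measure.map_apply (by fun_prop) (measurableSet_eq_fun measurable_snd measurable_const)]
  have hpre : (fun p : ℝ × ℝ => (s p.1 + p.2, p.1)) ⁻¹' {p | p.2 = t} = {t} ×ˢ univ := by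
    ext p; simp
  rw [hpre, Measure.prod_prod, measure_univ, mul_one]

theorem ae_tendstoLocallyUniformly_empiricalMean_mfn {Ω : Type*} [MeasurableSpace Ω]
    {P : Measure Ω} {ℙd : Measure (ℝ × ℝ)} [IsProbabilityMeasure ℙd] {X : ℕ → Ω → ℝ × ℝ}
    (hX : ∀ i, Measurable (X i)) (hlaw : ∀ i, Measure.map (X i) P = ℙd)
    (hindep : ProbabilityTheory.iIndepFun X P) (hL2 : MemLp Prod.fst 2 ℙd)
    (hatom : ∀ t, ℙd {p | p.2 = t} = 0) :
    ∀ᵐ ω ∂P, TendstoLocallyUniformly (fun n θ => empiricalMean (X · ω) (mfn θ) n)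
      (fun θ => ∫ p, mfn θ p ∂ℙd) atTop := by
  have h1 : Integrable Prod.fst ℙd := hL2.integrable one_le_two
  filter_upwards [ae_tendsto_empiricalMean hX hlaw hindep (by fun_prop) hL2.integrable_sq,
    ae_tendsto_empiricalMean hX hlaw hindep measurable_fst h1,
    ae_tendstoLocallyUniformly_empiricalMean_indicator hX hlaw hindep measurable_snd hatom
      measurable_fst h1,
    ae_tendstoLocallyUniformly_empiricalMean_indicator (w := fun _ => 1) hX hlaw hindep
      measurable_snd hatom measurable_const (integrable_const 1)] with ω h2 h1 hU hV
  exact tendstoLocallyUniformly_empiricalMean_mfn hL2 h2 h1 hU hV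

theorem stmt6_general
    {Ω : Type} [MeasurableSpace Ω] (P : Measure Ω)
    -- model parameters
    (α₀ β₀ a b ζ₀ : ℝ) (f : ℝ → ℝ)
    (νZ νε : Measure ℝ) [IsProbabilityMeasure νZ] [IsProbabilityMeasure νε]
    (ℙd : Measure (ℝ × ℝ))
    -- `Z` has a bounded density `f`, positive on `[a,b]`, bounded away from `0` near `ζ₀`
    (hνZ : νZ = volume.withDensity (fun z => ENNReal.ofReal (f z)))
    -- `ε` has a continuous distribution, mean `0`, variance `σ² > 0`, finite third moment
    (hεL2 : Integrable (fun x => x ^ 2) νε)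
    -- `ℙd` is the law of `(Y, Z)` with `Y = α₀·1{Z≤ζ₀} + β₀·1{Z>ζ₀} + ε`, `ε ⟂ Z`
    (hℙd : ℙd = Measure.map
      (fun p : ℝ × ℝ => ((if p.1 ≤ ζ₀ then α₀ else β₀) + p.2, p.1)) (νZ.prod νε))
    -- i.i.d. data `(X_i) = (Y_i, Z_i)` with law `ℙd`
    (Xd : ℕ → Ω → ℝ × ℝ) (hXdMeas : ∀ i, Measurable (Xd i))
    (hXdLaw : ∀ i, Measure.map (Xd i) P = ℙd)
    (hXdIndep : ProbabilityTheory.iIndepFun Xd P) :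
    -- conclusion: uniform a.s. convergence of `M_n` to `M` on compact rectangles of `Θ`
    ∀ lo hi : ℝ × ℝ × ℝ, (∀ θ ∈ Icc lo hi, θ.2.2 ∈ Icc a b) →
      ∀ᵐ ω ∂P, TendstoUniformlyOn
        (fun (n : ℕ) (θ : ℝ × ℝ × ℝ) => (n : ℝ)⁻¹ * ∑ i ∈ Finset.range n, mfn θ (Xd i ω))
        (fun θ => ∫ x, mfn θ x ∂ℙd) atTop (Icc lo hi) := by
  intro lo hi _
  have hs : Measurable fun z : ℝ => if z ≤ ζ₀ then α₀ else β₀ :=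
    Measurable.ite measurableSet_Iic measurable_const measurable_const
  have hsZ : MemLp (fun z : ℝ => if z ≤ ζ₀ then α₀ else β₀) 2 νZ :=
    .of_bound hs.aestronglyMeasurable (max |α₀| |β₀|) (.of_forall fun z => by split_ifs <;> simp)
  have hL2 : MemLp Prod.fst 2 ℙd := hℙd ▸ memLp_fst_map_regression hs hsZ
    ((memLp_two_iff_integrable_sq aestronglyMeasurable_id).2 hεL2)
  have hatom : ∀ t, ℙd {p | p.2 = t} = 0 := fun t => by
    rw [hℙd, map_regression_setOf_snd_eq hs, hνZ]
    exact withDensity_absolutelyContinuous _ _ Real.volume_singleton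
  have : IsProbabilityMeasure ℙd := hℙd ▸ Measure.isProbabilityMeasure_map
    (((hs.comp measurable_fst).add measurable_snd).prodMk measurable_fst).aemeasurable
  filter_upwards [ae_tendstoLocallyUniformly_empiricalMean_mfn hXdMeas hXdLaw hXdIndep hL2 hatom]
    with ω hω
  exact tendstoLocallyUniformly_iff_forall_isCompact.1 hω _ isCompact_Icc

/-- Lemma 4.1(i): for every compact rectangle `K = Icc lo hi ⊆ Θ`,
`sup_{θ ∈ K} |M_n(θ) − M(θ)| → 0` almost surely (uniform convergence on `K`). -/
theorem stmt6
    {Ω : Type} [MeasurableSpace Ω] (P : Measure Ω) [IsProbabilityMeasure P]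
    -- model parameters
    (α₀ β₀ a b ζ₀ σ2 Mbd : ℝ) (f : ℝ → ℝ)
    (νZ νε : Measure ℝ) [IsProbabilityMeasure νZ] [IsProbabilityMeasure νε]
    (ℙd : Measure (ℝ × ℝ))
    (hab : a < b) (hζ₀ : ζ₀ ∈ Icc a b) (hαβ : α₀ ≠ β₀)
    -- `Z` has a bounded density `f`, positive on `[a,b]`, bounded away from `0` near `ζ₀`
    (hνZ : νZ = volume.withDensity (fun z => ENNReal.ofReal (f z)))
    (hfbd : ∃ C, ∀ z, f z ≤ C)
    (hfpos : ∀ z ∈ Icc a b, 0 < f z)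
    (hfloc : ∃ η₀ > (0 : ℝ), ∃ κ > (0 : ℝ), ∀ z, |z - ζ₀| ≤ η₀ → κ < f z)
    (hZa : 0 < νZ (Iio a)) (hZb : 0 < νZ (Ioi b))
    -- `ε` has a continuous distribution, mean `0`, variance `σ² > 0`, finite third moment
    (hεcont : ∀ x : ℝ, νε {x} = 0)
    (hεmean : ∫ x, x ∂νε = 0)
    (hεL2 : Integrable (fun x => x ^ 2) νε)
    (hεvar : ∫ x, x ^ 2 ∂νε = σ2) (hσ : 0 < σ2)
    (hεL3 : Integrable (fun x => |x| ^ 3) νε)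
    -- `ℙd` is the law of `(Y, Z)` with `Y = α₀·1{Z≤ζ₀} + β₀·1{Z>ζ₀} + ε`, `ε ⟂ Z`
    (hℙd : ℙd = Measure.map
      (fun p : ℝ × ℝ => ((if p.1 ≤ ζ₀ then α₀ else β₀) + p.2, p.1)) (νZ.prod νε))
    -- i.i.d. data `(X_i) = (Y_i, Z_i)` with law `ℙd`
    (Xd : ℕ → Ω → ℝ × ℝ) (hXdMeas : ∀ i, Measurable (Xd i))
    (hXdLaw : ∀ i, Measure.map (Xd i) P = ℙd)
    (hXdIndep : ProbabilityTheory.iIndepFun Xd P) :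
    -- conclusion: uniform a.s. convergence of `M_n` to `M` on compact rectangles of `Θ`
    ∀ lo hi : ℝ × ℝ × ℝ, (∀ θ ∈ Icc lo hi, θ.2.2 ∈ Icc a b) →
      ∀ᵐ ω ∂P, TendstoUniformlyOn
        (fun (n : ℕ) (θ : ℝ × ℝ × ℝ) => (n : ℝ)⁻¹ * ∑ i ∈ Finset.range n, mfn θ (Xd i ω))
        (fun θ => ∫ x, mfn θ x ∂ℙd) atTop (Icc lo hi) :=
  stmt6_general P α₀ β₀ a b ζ₀ f νZ νε ℙd hνZ hεL2 hℙd Xd hXdMeas hXdLaw hXdIndep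
end
end

section
/- Almost surely, every sequence of maximizers of the empirical criterion converges to the true parameter: for P-almost every ω, if for each n the point θ_n ∈ Θ satisfies M_n(θ_n)(ω) = sup_{θ∈Θ} M_n(θ)(ω), then θ_n → θ₀. In particular, the least squares estimator θ̂_n converges to θ₀ almost surely. (Lemma 4.1(iii): strong consistency of the least squares estimator.) -/
open MeasureTheory Filter Set

noncomputable section

/-!
Let `ε̃` be the residuals at `θ₀` and `μ_θ` the regression function of `θ`. Since a maximizer `θ`
beats `θ₀`, the empirical mean of `(μ_θ - μ_{θ₀})²` is at most `-2` times the empirical mean of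
`ε̃ (μ_{θ₀} - μ_θ)`. The difference `μ_{θ₀} - μ_θ` is a step function with levels `u, v, w` on
`(-∞, ζ₁]`, `(ζ₁, ζ₂]`, `(ζ₂, ∞)` where `ζ₁ = min ζ ζ₀`, `ζ₂ = max ζ ζ₀`; so the left side is
`u² A(ζ₁) + v² (A(ζ₂) - A(ζ₁)) + w² (1 - A(ζ₂))` for the empirical CDF `A` of `Z`, and the right
side is linear in `u, v, w` with coefficients given by the process `t ↦ n⁻¹ ∑ ε̃ᵢ 1{Zᵢ ≤ t}`.
The strong law at rational points and Pólya's monotonicity argument (applied to the positive and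
negative parts of `ε̃` separately) make `A → F` and the residual process `→ 0` uniformly on
`[a, b]`, almost surely. As `Z` charges both sides of `[a, b]`, the left side is at least
`r (u² + w²)` for some `r > 0`, while the right side is `O((|u| + |w| + 1) Δₙ)` with `Δₙ → 0`;
hence `u, w → 0`. Then `|v| → |α₀ - β₀| > 0` forces `F(ζ₂) - F(ζ₁) → 0`, and the density bound
near `ζ₀` turns this into `ζ → ζ₀`.
-/

open Topology ProbabilityTheory
open scoped BigOperators

lemma le_add_sqrt_of_sq_le {s p q : ℝ} (hp : 0 ≤ p) (h : s ^ 2 ≤ p * s + q) :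
    s ≤ p + √q := by
  rcases le_or_gt s p with hsp | hps
  · linarith [Real.sqrt_nonneg q]
  · have : s - p ≤ √q := Real.le_sqrt_of_sq_le (by nlinarith)
    linarith

lemma tendsto_zero_of_sq_le_mul {ι : Type*} {l : Filter ι} {s Δ : ι → ℝ} {K L : ℝ}
    (hK : 0 ≤ K) (hs : ∀ i, 0 ≤ s i) (hΔ0 : ∀ i, 0 ≤ Δ i) (hΔ : Tendsto Δ l (𝓝 0))
    (h : ∀ᶠ i in l, s i ^ 2 ≤ (K * s i + L) * Δ i) :
    Tendsto s l (𝓝 0) := by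
  have hbound : Tendsto (fun i => K * Δ i + √(L * Δ i)) l (𝓝 0) := by
    simpa using (hΔ.const_mul K).add ((hΔ.const_mul L).sqrt)
  refine squeeze_zero' (.of_forall hs) ?_ hbound
  filter_upwards [h] with i hi
  exact le_add_sqrt_of_sq_le (mul_nonneg hK (hΔ0 i)) (by linarith)

lemma tendsto_of_tendsto_sq_sub {ι : Type*} {l : Filter ι} {f : ι → ℝ} {c : ℝ}
    (h : Tendsto (fun i => (c - f i) ^ 2) l (𝓝 0)) : Tendsto f l (𝓝 c) := by
  rw [tendsto_iff_dist_tendsto_zero]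
  simpa [Real.sqrt_sq_eq_abs, Real.dist_eq, abs_sub_comm] using h.sqrt

section Polya

variable {ι : Type*} {a b : ℝ} {D : Set ℝ} {G : ℝ → ℝ}

lemma exists_mem_dense_ge {l : Filter ι} (hD : Dense D) (hb : b ∈ D) {ζ : ι → ℝ}
    (hζ : ∀ i, ζ i ∈ Icc a b) {x : ℝ} (hx : x ∈ Icc a b) (hζx : Tendsto ζ l (𝓝 x))
    {δ : ℝ} (hδ : 0 < δ) :
    ∃ q ∈ D, q ∈ Icc a b ∧ |q - x| < δ ∧ ∀ᶠ i in l, ζ i ≤ q := by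
  rcases hx.2.eq_or_lt with rfl | hxb
  · exact ⟨x, hb, hx, by simpa using hδ, .of_forall fun i => (hζ i).2⟩
  · obtain ⟨q, hqD, hxq, hqx⟩ := hD.exists_between (lt_min hxb (lt_add_of_pos_right x hδ))
    refine ⟨q, hqD, ⟨hx.1.trans hxq.le, hqx.le.trans (min_le_left _ _)⟩, ?_,
      hζx.eventually (eventually_le_nhds hxq)⟩
    rw [abs_lt]; constructor <;> linarith [min_le_right b (x + δ)]

lemma exists_mem_dense_le {l : Filter ι} (hD : Dense D) (ha : a ∈ D) {ζ : ι → ℝ}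
    (hζ : ∀ i, ζ i ∈ Icc a b) {x : ℝ} (hx : x ∈ Icc a b) (hζx : Tendsto ζ l (𝓝 x))
    {δ : ℝ} (hδ : 0 < δ) :
    ∃ p ∈ D, p ∈ Icc a b ∧ |p - x| < δ ∧ ∀ᶠ i in l, p ≤ ζ i := by
  rcases hx.1.eq_or_lt with rfl | hax
  · exact ⟨a, ha, hx, by simpa using hδ, .of_forall fun i => (hζ i).1⟩
  · obtain ⟨p, hpD, hxp, hpx⟩ := hD.exists_between (max_lt hax (sub_lt_self x hδ))
    refine ⟨p, hpD, ⟨(le_max_left _ _).trans hxp.le, hpx.le.trans hx.2⟩, ?_,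
      hζx.eventually (eventually_ge_nhds hpx)⟩
    rw [abs_lt]; constructor <;> linarith [le_max_right a (x - δ)]

/-- Pólya's argument: a limit point of `ζ i` is bracketed by two points of `D` at which
`g i` converges, and continuity of `G` makes the bracket tight. -/
lemma tendsto_sub_comp_of_tendsto_nhds {l : Filter ι} (hD : Dense D) (ha : a ∈ D) (hb : b ∈ D)
    {g : ι → ℝ → ℝ} (hg : ∀ i, Monotone (g i)) (hG : ContinuousOn G (Icc a b))
    (hlim : ∀ t ∈ D, Tendsto (fun i => g i t) l (𝓝 (G t)))
    {ζ : ι → ℝ} (hζ : ∀ i, ζ i ∈ Icc a b) {x : ℝ} (hx : x ∈ Icc a b)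
    (hζx : Tendsto ζ l (𝓝 x)) :
    Tendsto (fun i => g i (ζ i) - G (ζ i)) l (𝓝 0) := by
  rw [Metric.tendsto_nhds]
  intro ε hε
  obtain ⟨δ, hδ, hGδ⟩ := Metric.continuousWithinAt_iff.1 (hG x hx) (ε / 3) (by positivity)
  obtain ⟨q, hqD, hq, hqx, hζq⟩ := exists_mem_dense_ge hD hb hζ hx hζx hδ
  obtain ⟨p, hpD, hp, hpx, hζp⟩ := exists_mem_dense_le hD ha hζ hx hζx hδ
  have hGζ : Tendsto (fun i => G (ζ i)) l (𝓝 (G x)) :=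
    (hG x hx).tendsto.comp (tendsto_nhdsWithin_iff.2 ⟨hζx, .of_forall hζ⟩)
  have hGq := hGδ hq hqx
  have hGp := hGδ hp hpx
  filter_upwards [hζq, hζp, Metric.tendsto_nhds.1 (hlim q hqD) _ (by positivity : 0 < ε / 3),
    Metric.tendsto_nhds.1 (hlim p hpD) _ (by positivity : 0 < ε / 3),
    Metric.tendsto_nhds.1 hGζ _ (by positivity : 0 < ε / 3)] with i hiq hip hgq hgp hGi
  have hup := hg i hiq
  have hlo := hg i hip
  simp only [Real.dist_eq, abs_lt] at hGq hGp hgq hgp hGi ⊢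
  constructor <;> linarith

lemma tendsto_sub_comp_of_monotone (hD : Dense D) (ha : a ∈ D) (hb : b ∈ D) {g : ℕ → ℝ → ℝ}
    (hg : ∀ n, Monotone (g n)) (hG : ContinuousOn G (Icc a b))
    (hlim : ∀ t ∈ D, Tendsto (fun n => g n t) atTop (𝓝 (G t)))
    {ζ : ℕ → ℝ} (hζ : ∀ n, ζ n ∈ Icc a b) :
    Tendsto (fun n => g n (ζ n) - G (ζ n)) atTop (𝓝 0) := by
  refine tendsto_of_subseq_tendsto fun ns hns => ?_
  obtain ⟨x, hx, φ, hφ, hζx⟩ := isCompact_Icc.tendsto_subseq fun n => hζ (ns n)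
  exact ⟨φ, tendsto_sub_comp_of_tendsto_nhds hD ha hb (fun n => hg _) hG
    (fun t ht => (hlim t ht).comp (hns.comp hφ.tendsto_atTop)) (fun n => hζ _) hx hζx⟩

end Polya

lemma ae_tendsto_expect_comp {Ω E : Type*} [MeasurableSpace Ω] [MeasurableSpace E]
    {P : Measure Ω} {μ : Measure E} {X : ℕ → Ω → E} (hX : ∀ i, Measurable (X i))
    (hlaw : ∀ i, P.map (X i) = μ) (hindep : iIndepFun X P)
    {h : E → ℝ} (hm : Measurable h) (hi : Integrable h μ) :
    ∀ᵐ ω ∂P, Tendsto (fun n => 𝔼 i ∈ Finset.range n, h (X i ω)) atTop (𝓝 (∫ e, h e ∂μ)) := by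
  have hident : ∀ i, IdentDistrib (fun ω => h (X i ω)) (fun ω => h (X 0 ω)) P P := fun i =>
    IdentDistrib.comp ⟨(hX i).aemeasurable, (hX 0).aemeasurable, by rw [hlaw, hlaw]⟩ hm
  have hint : Integrable (fun ω => h (X 0 ω)) P := by
    rw [← hlaw 0] at hi
    exact hi.comp_measurable (hX 0)
  have hmean : ∫ ω, h (X 0 ω) ∂P = ∫ e, h e ∂μ := by
    rw [← hlaw 0, integral_map (hX 0).aemeasurable hm.aestronglyMeasurable]
  filter_upwards [strong_law_ae_real (fun i ω => h (X i ω)) hint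
    (fun i j hij => (hindep.indepFun hij).comp hm hm) hident] with ω hω
  simpa only [Finset.expect_eq_sum_div_card, Finset.card_range, hmean] using hω

lemma ae_tendsto_expect_sub_integral_of_monotone {Ω E : Type*} [MeasurableSpace Ω]
    [MeasurableSpace E] {P : Measure Ω} {μ : Measure E} {X : ℕ → Ω → E}
    (hX : ∀ i, Measurable (X i)) (hlaw : ∀ i, P.map (X i) = μ) (hindep : iIndepFun X P)
    {k : ℝ → E → ℝ} (hk : ∀ e, Monotone fun t => k t e) (hkm : ∀ t, Measurable (k t))
    (hki : ∀ t, Integrable (k t) μ) {a b : ℝ}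
    (hG : ContinuousOn (fun t => ∫ e, k t e ∂μ) (Icc a b)) :
    ∀ᵐ ω ∂P, ∀ ζ : ℕ → ℝ, (∀ n, ζ n ∈ Icc a b) →
      Tendsto (fun n => 𝔼 i ∈ Finset.range n, k (ζ n) (X i ω) - ∫ e, k (ζ n) e ∂μ)
        atTop (𝓝 0) := by
  set D : Set ℝ := insert a (insert b (range ((↑) : ℚ → ℝ)))
  have hD : Dense D := Rat.denseRange_cast.mono ((subset_insert _ _).trans (subset_insert _ _))
  have hDc : D.Countable := ((countable_range _).insert _).insert _
  filter_upwards [(ae_ball_iff hDc).2 fun t _ =>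
    ae_tendsto_expect_comp hX hlaw hindep (hkm t) (hki t)] with ω hω ζ hζ
  exact tendsto_sub_comp_of_monotone hD (mem_insert _ _) (mem_insert_of_mem _ (mem_insert _ _))
    (g := fun n t => 𝔼 i ∈ Finset.range n, k t (X i ω))
    (fun n s t hst => Finset.expect_le_expect fun i _ => hk _ hst) hG hω hζ

lemma continuous_cdf (μ : Measure ℝ) [IsProbabilityMeasure μ] [NullSingletonClass μ] :
    Continuous (cdf μ) := by
  refine continuous_iff_continuousAt.2 fun x => continuousAt_iff_continuous_left'_right'.2
    ⟨?_, ((cdf μ).right_continuous x).mono Ioi_subset_Ici_self⟩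
  refine (monotone_cdf μ).continuousWithinAt_Iio_iff_leftLim_eq.2
    (le_antisymm ((monotone_cdf μ).leftLim_le le_rfl) ?_)
  have h := (cdf μ).measure_singleton x
  rwa [measure_cdf, measure_singleton, eq_comm, ENNReal.ofReal_eq_zero, sub_nonpos] at h

lemma cdf_pos_of_measure_Iio_pos {μ : Measure ℝ} [IsProbabilityMeasure μ] {a : ℝ}
    (h : 0 < μ (Iio a)) : 0 < cdf μ a := by
  rw [cdf_eq_real]
  exact ENNReal.toReal_pos (h.trans_le (measure_mono Iio_subset_Iic_self)).ne' (measure_ne_top _ _)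

lemma cdf_lt_one_of_measure_Ioi_pos {μ : Measure ℝ} [IsProbabilityMeasure μ] {b : ℝ}
    (h : 0 < μ (Ioi b)) : cdf μ b < 1 := by
  have hlt : μ (Iic b) < 1 := by
    rw [← compl_Ioi, prob_compl_eq_one_sub measurableSet_Ioi]
    exact ENNReal.sub_lt_self ENNReal.one_ne_top one_ne_zero h.ne'
  rwa [← ofReal_cdf, ENNReal.ofReal_lt_one] at hlt

section Density

variable {f : ℝ → ℝ} {νZ : Measure ℝ} [IsProbabilityMeasure νZ]

lemma mul_sub_le_cdf_sub (hνZ : νZ = volume.withDensity fun z => ENNReal.ofReal (f z))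
    {κ s t : ℝ} (hκ : 0 ≤ κ) (hst : s ≤ t) (hf : ∀ z ∈ Ioc s t, κ ≤ f z) :
    κ * (t - s) ≤ cdf νZ t - cdf νZ s := by
  have h : ENNReal.ofReal (κ * (t - s)) ≤ νZ (Ioc s t) := by
    rw [hνZ, withDensity_apply _ measurableSet_Ioc, ENNReal.ofReal_mul hκ, ← Real.volume_Ioc,
      ← setLIntegral_const]
    exact setLIntegral_mono' measurableSet_Ioc fun z hz => ENNReal.ofReal_le_ofReal (hf z hz)
  rwa [← measure_cdf νZ, StieltjesFunction.measure_Ioc,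
    ENNReal.ofReal_le_ofReal_iff (sub_nonneg.2 (monotone_cdf νZ hst))] at h

lemma exists_le_cdf_sub_of_le_abs (hνZ : νZ = volume.withDensity fun z => ENNReal.ofReal (f z))
    {ζ₀ η κ : ℝ} (hη : 0 < η) (hκ : 0 < κ) (hf : ∀ z, |z - ζ₀| ≤ η → κ < f z) :
    ∀ ε > 0, ∃ δ > 0, ∀ ζ, ε ≤ |ζ - ζ₀| → δ ≤ cdf νZ (max ζ ζ₀) - cdf νZ (min ζ ζ₀) := by
  intro ε hε
  have hm : 0 < min ε η := lt_min hε hη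
  refine ⟨κ * min ε η, by positivity, fun ζ hζ => ?_⟩
  have hfm : ∀ z, |z - ζ₀| ≤ min ε η → κ ≤ f z := fun z hz =>
    (hf z (hz.trans (min_le_right ε η))).le
  rcases le_total ζ₀ ζ with h | h
  · rw [max_eq_left h, min_eq_right h]
    have hlow := mul_sub_le_cdf_sub hνZ hκ.le
      (le_add_of_nonneg_right hm.le : ζ₀ ≤ ζ₀ + min ε η) fun z hz =>
      hfm z (abs_le.2 ⟨by linarith [hz.1], by linarith [hz.2]⟩)
    have hmono := monotone_cdf νZ (show ζ₀ + min ε η ≤ ζ by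
      linarith [min_le_left ε η, abs_of_nonneg (sub_nonneg.2 h)])
    linarith
  · rw [max_eq_right h, min_eq_left h]
    have hlow := mul_sub_le_cdf_sub hνZ hκ.le
      (sub_le_self ζ₀ hm.le : ζ₀ - min ε η ≤ ζ₀) fun z hz =>
      hfm z (abs_le.2 ⟨by linarith [hz.1], by linarith [hz.2]⟩)
    have hmono := monotone_cdf νZ (show ζ ≤ ζ₀ - min ε η by
      linarith [min_le_left ε η, abs_of_nonpos (sub_nonpos.2 h)])
    linarith

end Density

def weightedEmpCdf (w : ℝ × ℝ → ℝ) (x : ℕ → ℝ × ℝ) (n : ℕ) (t : ℝ) : ℝ :=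
  𝔼 i ∈ Finset.range n, w (x i) * (Iic t).indicator 1 (x i).2

def threeStep (u v w s t z : ℝ) : ℝ :=
  u * (Iic s).indicator 1 z + v * ((Iic t).indicator 1 z - (Iic s).indicator 1 z)
    + w * (1 - (Iic t).indicator 1 z)

lemma threeStep_sq (u v w : ℝ) {s t : ℝ} (hst : s ≤ t) (z : ℝ) :
    threeStep u v w s t z ^ 2 = threeStep (u ^ 2) (v ^ 2) (w ^ 2) s t z := by
  by_cases hzs : z ≤ s
  · simp [threeStep, hzs, hzs.trans hst]
  · by_cases hzt : z ≤ t <;> simp [threeStep, hzs, hzt]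

lemma expect_mul_threeStep (c : ℝ × ℝ → ℝ) (x : ℕ → ℝ × ℝ) (n : ℕ) (u v w s t : ℝ) :
    𝔼 i ∈ Finset.range n, c (x i) * threeStep u v w s t (x i).2 =
      u * weightedEmpCdf c x n s + v * (weightedEmpCdf c x n t - weightedEmpCdf c x n s)
        + w * (𝔼 i ∈ Finset.range n, c (x i) - weightedEmpCdf c x n t) := by
  have hpt : ∀ i, c (x i) * threeStep u v w s t (x i).2 =
      u * (c (x i) * (Iic s).indicator 1 (x i).2)
        + v * (c (x i) * (Iic t).indicator 1 (x i).2 - c (x i) * (Iic s).indicator 1 (x i).2)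
        + w * (c (x i) - c (x i) * (Iic t).indicator 1 (x i).2) := fun i => by
    simp only [threeStep]; ring
  simp only [hpt, weightedEmpCdf, Finset.expect_add_distrib, ← Finset.mul_expect,
    Finset.expect_sub_distrib]

/-- The value of `μ_{θ₀} − μ_θ` between the two change points. -/
def jump (θ₀ θ : ℝ × ℝ × ℝ) : ℝ :=
  if θ₀.2.2 ≤ θ.2.2 then θ₀.2.1 - θ.1 else θ₀.1 - θ.2.1

lemma epstil_sub_epstil (θ₀ θ : ℝ × ℝ × ℝ) (p : ℝ × ℝ) :
    epstil θ p - epstil θ₀ p = threeStep (θ₀.1 - θ.1) (jump θ₀ θ) (θ₀.2.1 - θ.2.1)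
      (min θ.2.2 θ₀.2.2) (max θ.2.2 θ₀.2.2) p.2 := by
  simp only [epstil, threeStep, jump, indicator_apply, mem_Iic, Pi.one_apply]
  rcases le_total θ₀.2.2 θ.2.2 with h | h
  · simp only [min_eq_right h, max_eq_left h, if_pos h]
    split_ifs <;> first | (exfalso; linarith) | ring
  · simp only [min_eq_left h, max_eq_right h]
    split_ifs <;> first | (exfalso; linarith) | ring

lemma mfn_sub_mfn (θ₀ θ : ℝ × ℝ × ℝ) (p : ℝ × ℝ) :
    mfn θ₀ p - mfn θ p = (epstil θ p - epstil θ₀ p) ^ 2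
      + 2 * (epstil θ₀ p * (epstil θ p - epstil θ₀ p)) := by
  simp only [mfn, epstil]; ring

lemma jump_eq (θ₀ θ : ℝ × ℝ × ℝ) :
    jump θ₀ θ = (θ₀.1 - θ.1) - (θ₀.1 - θ₀.2.1) ∨
      jump θ₀ θ = (θ₀.2.1 - θ.2.1) + (θ₀.1 - θ₀.2.1) := by
  unfold jump
  split_ifs
  exacts [.inl (by ring), .inr (by ring)]

lemma abs_jump_le (θ₀ θ : ℝ × ℝ × ℝ) :
    |jump θ₀ θ| ≤ |θ₀.1 - θ.1| + |θ₀.2.1 - θ.2.1| + |θ₀.1 - θ₀.2.1| := by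
  rcases jump_eq θ₀ θ with h | h <;> rw [h]
  · linarith [abs_sub (θ₀.1 - θ.1) (θ₀.1 - θ₀.2.1), abs_nonneg (θ₀.2.1 - θ.2.1)]
  · linarith [abs_add_le (θ₀.2.1 - θ.2.1) (θ₀.1 - θ₀.2.1), abs_nonneg (θ₀.1 - θ.1)]

lemma abs_sub_le_abs_jump (θ₀ θ : ℝ × ℝ × ℝ) :
    |θ₀.1 - θ₀.2.1| ≤ |θ₀.1 - θ.1| + |jump θ₀ θ| + |θ₀.2.1 - θ.2.1| := by
  rcases jump_eq θ₀ θ with h | h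
  · rw [show θ₀.1 - θ₀.2.1 = θ₀.1 - θ.1 - jump θ₀ θ by linarith]
    linarith [abs_sub (θ₀.1 - θ.1) (jump θ₀ θ), abs_nonneg (θ₀.2.1 - θ.2.1)]
  · rw [show θ₀.1 - θ₀.2.1 = jump θ₀ θ - (θ₀.2.1 - θ.2.1) by linarith]
    linarith [abs_sub (jump θ₀ θ) (θ₀.2.1 - θ.2.1), abs_nonneg (θ₀.1 - θ.1)]

lemma weightedEmpCdf_mono {w : ℝ × ℝ → ℝ} (hw : 0 ≤ w) (x : ℕ → ℝ × ℝ) (n : ℕ) :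
    Monotone (weightedEmpCdf w x n) := fun _ _ hst =>
  Finset.expect_le_expect fun _ _ => mul_le_mul_of_nonneg_left
    (indicator_le_indicator_of_subset (Iic_subset_Iic.2 hst) (fun _ => zero_le_one) _) (hw _)

lemma abs_mul_add_mul_sub_le (u v w e₁ e₂ e₃ : ℝ) :
    |u * e₁ + v * (e₂ - e₁) + w * (e₃ - e₂)| ≤ (|u| + |v| + |w|) * (|e₁| + |e₂| + |e₃|) := by
  calc _ ≤ |u| * |e₁| + |v| * |e₂ - e₁| + |w| * |e₃ - e₂| := by
        simpa only [abs_mul] using abs_add_three (u * e₁) (v * (e₂ - e₁)) (w * (e₃ - e₂))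
    _ ≤ |u| * (|e₁| + |e₂| + |e₃|) + |v| * (|e₁| + |e₂| + |e₃|) + |w| * (|e₁| + |e₂| + |e₃|) := by
        gcongr <;>
          linarith [abs_sub e₂ e₁, abs_sub e₃ e₂, abs_nonneg e₁, abs_nonneg e₂, abs_nonneg e₃]
    _ = _ := by ring

/-- Empirical squared `L²` distance between the regression functions of `θ₀` and `θ`. -/
def empSqDist (x : ℕ → ℝ × ℝ) (n : ℕ) (θ₀ θ : ℝ × ℝ × ℝ) : ℝ :=
  𝔼 i ∈ Finset.range n, (epstil θ (x i) - epstil θ₀ (x i)) ^ 2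

section Empirical

variable (x : ℕ → ℝ × ℝ) (n : ℕ) (θ₀ θ : ℝ × ℝ × ℝ)

lemma empSqDist_eq (hn : n ≠ 0) :
    empSqDist x n θ₀ θ =
      (θ₀.1 - θ.1) ^ 2 * weightedEmpCdf 1 x n (min θ.2.2 θ₀.2.2)
        + jump θ₀ θ ^ 2 * (weightedEmpCdf 1 x n (max θ.2.2 θ₀.2.2)
          - weightedEmpCdf 1 x n (min θ.2.2 θ₀.2.2))
        + (θ₀.2.1 - θ.2.1) ^ 2 * (1 - weightedEmpCdf 1 x n (max θ.2.2 θ₀.2.2)) := by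
  have h := expect_mul_threeStep 1 x n ((θ₀.1 - θ.1) ^ 2) (jump θ₀ θ ^ 2) ((θ₀.2.1 - θ.2.1) ^ 2)
    (min θ.2.2 θ₀.2.2) (max θ.2.2 θ₀.2.2)
  simp only [Pi.one_apply, one_mul, Finset.expect_const (Finset.nonempty_range_iff.2 hn)] at h
  simp only [empSqDist, epstil_sub_epstil, threeStep_sq _ _ _ min_le_max, h]

lemma empSqDist_le_of_expect_mfn_le
    (hmax : 𝔼 i ∈ Finset.range n, mfn θ₀ (x i) ≤ 𝔼 i ∈ Finset.range n, mfn θ (x i)) :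
    empSqDist x n θ₀ θ ≤
      2 * (|θ₀.1 - θ.1| + |jump θ₀ θ| + |θ₀.2.1 - θ.2.1|)
        * (|weightedEmpCdf (epstil θ₀) x n (min θ.2.2 θ₀.2.2)|
          + |weightedEmpCdf (epstil θ₀) x n (max θ.2.2 θ₀.2.2)|
          + |𝔼 i ∈ Finset.range n, epstil θ₀ (x i)|) := by
  have hcross := expect_mul_threeStep (epstil θ₀) x n (θ₀.1 - θ.1) (jump θ₀ θ) (θ₀.2.1 - θ.2.1)
    (min θ.2.2 θ₀.2.2) (max θ.2.2 θ₀.2.2)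
  simp only [← epstil_sub_epstil] at hcross
  have hdiff : 𝔼 i ∈ Finset.range n, mfn θ₀ (x i) - 𝔼 i ∈ Finset.range n, mfn θ (x i) =
      𝔼 i ∈ Finset.range n, (epstil θ (x i) - epstil θ₀ (x i)) ^ 2
        + 2 * 𝔼 i ∈ Finset.range n, epstil θ₀ (x i) * (epstil θ (x i) - epstil θ₀ (x i)) := by
    simp only [← Finset.expect_sub_distrib, mfn_sub_mfn, Finset.expect_add_distrib,
      Finset.mul_expect]
  have := abs_mul_add_mul_sub_le (θ₀.1 - θ.1) (jump θ₀ θ) (θ₀.2.1 - θ.2.1)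
    (weightedEmpCdf (epstil θ₀) x n (min θ.2.2 θ₀.2.2))
    (weightedEmpCdf (epstil θ₀) x n (max θ.2.2 θ₀.2.2)) (𝔼 i ∈ Finset.range n, epstil θ₀ (x i))
  rw [← hcross] at this
  unfold empSqDist
  linarith [neg_abs_le (𝔼 i ∈ Finset.range n, epstil θ₀ (x i) * (epstil θ (x i) - epstil θ₀ (x i)))]

lemma empSqDist_ge {a b r : ℝ} (hr : 0 ≤ r) (hn : n ≠ 0) (hθ : θ.2.2 ∈ Icc a b)
    (hζ₀ : θ₀.2.2 ∈ Icc a b)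
    (ha : r ≤ weightedEmpCdf 1 x n a) (hb : weightedEmpCdf 1 x n b ≤ 1 - r) :
    r * ((θ₀.1 - θ.1) ^ 2 + (θ₀.2.1 - θ.2.1) ^ 2) ≤ empSqDist x n θ₀ θ ∧
      jump θ₀ θ ^ 2 * (weightedEmpCdf 1 x n (max θ.2.2 θ₀.2.2)
        - weightedEmpCdf 1 x n (min θ.2.2 θ₀.2.2)) ≤ empSqDist x n θ₀ θ := by
  have hmono := weightedEmpCdf_mono zero_le_one x n
  have h₁ := ha.trans (hmono (le_min hθ.1 hζ₀.1))
  have h₂ := (hmono (max_le hθ.2 hζ₀.2)).trans hb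
  have h₁₂ := sub_nonneg.2 (hmono (min_le_max : min θ.2.2 θ₀.2.2 ≤ _))
  rw [empSqDist_eq x n θ₀ θ hn]
  have hu := mul_le_mul_of_nonneg_left h₁ (sq_nonneg (θ₀.1 - θ.1))
  have hw := mul_le_mul_of_nonneg_left (le_sub_comm.1 h₂) (sq_nonneg (θ₀.2.1 - θ.2.1))
  have hv := mul_nonneg (sq_nonneg (jump θ₀ θ)) h₁₂
  constructor <;> nlinarith [sq_nonneg (θ₀.1 - θ.1), sq_nonneg (θ₀.2.1 - θ.2.1)]

end Empirical

section Consistency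

variable {a b : ℝ} {θ₀ : ℝ × ℝ × ℝ} {F : ℝ → ℝ} {x : ℕ → ℝ × ℝ} {θs : ℕ → ℝ × ℝ × ℝ}

lemma exists_pos_eventually_weightedEmpCdf_endpoints (hFa : 0 < F a) (hFb : F b < 1)
    (hAa : Tendsto (fun n => weightedEmpCdf 1 x n a) atTop (𝓝 (F a)))
    (hAb : Tendsto (fun n => weightedEmpCdf 1 x n b) atTop (𝓝 (F b))) :
    ∃ r > 0, ∀ᶠ n in atTop,
      n ≠ 0 ∧ r ≤ weightedEmpCdf 1 x n a ∧ weightedEmpCdf 1 x n b ≤ 1 - r := by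
  have hm : 0 < min (F a) (1 - F b) := lt_min hFa (sub_pos.2 hFb)
  have hra : min (F a) (1 - F b) / 2 < F a := (half_lt_self hm).trans_le (min_le_left _ _)
  have hrb : F b < 1 - min (F a) (1 - F b) / 2 := by
    linarith [half_lt_self hm, min_le_right (F a) (1 - F b)]
  refine ⟨_, half_pos hm, ?_⟩
  filter_upwards [eventually_ne_atTop 0, hAa.eventually (eventually_ge_nhds hra),
    hAb.eventually (eventually_le_nhds hrb)] with n hn ha hb
  exact ⟨hn, ha, hb⟩

lemma tendsto_empSqDist_zero {r : ℝ} (hr : 0 < r) (hζ₀ : θ₀.2.2 ∈ Icc a b)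
    (hend : ∀ᶠ n in atTop,
      n ≠ 0 ∧ r ≤ weightedEmpCdf 1 x n a ∧ weightedEmpCdf 1 x n b ≤ 1 - r)
    (hE : ∀ ζ : ℕ → ℝ, (∀ n, ζ n ∈ Icc a b) →
      Tendsto (fun n => weightedEmpCdf (epstil θ₀) x n (ζ n)) atTop (𝓝 0))
    (hT : Tendsto (fun n => 𝔼 i ∈ Finset.range n, epstil θ₀ (x i)) atTop (𝓝 0))
    (hΘ : ∀ n, (θs n).2.2 ∈ Icc a b)
    (hmax : ∀ n, 𝔼 i ∈ Finset.range n, mfn θ₀ (x i) ≤ 𝔼 i ∈ Finset.range n, mfn (θs n) (x i)) :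
    Tendsto (fun n => empSqDist x n θ₀ (θs n)) atTop (𝓝 0) := by
  set s := fun n => |θ₀.1 - (θs n).1| + |θ₀.2.1 - (θs n).2.1|
  set c := |θ₀.1 - θ₀.2.1|
  set Δ := fun n => |weightedEmpCdf (epstil θ₀) x n (min (θs n).2.2 θ₀.2.2)|
    + |weightedEmpCdf (epstil θ₀) x n (max (θs n).2.2 θ₀.2.2)|
    + |𝔼 i ∈ Finset.range n, epstil θ₀ (x i)|
  have hΔ0 : ∀ n, 0 ≤ Δ n := fun n => by positivity
  have hΔ : Tendsto Δ atTop (𝓝 0) := by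
    simpa using ((hE _ fun n => ⟨le_min (hΘ n).1 hζ₀.1, min_le_of_left_le (hΘ n).2⟩).abs.add
      (hE _ fun n => ⟨le_max_of_le_left (hΘ n).1, max_le (hΘ n).2 hζ₀.2⟩).abs).add hT.abs
  have hQ : ∀ n, empSqDist x n θ₀ (θs n) ≤ 2 * (2 * s n + c) * Δ n := fun n =>
    (empSqDist_le_of_expect_mfn_le x n θ₀ (θs n) (hmax n)).trans <|
      mul_le_mul_of_nonneg_right (by linarith [abs_jump_le θ₀ (θs n)]) (hΔ0 n)
  -- the quadratic growth of `empSqDist` in the levels beats the linear growth of the bound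
  have hs : Tendsto s atTop (𝓝 0) := by
    refine tendsto_zero_of_sq_le_mul (K := 8 / r) (L := 4 * c / r) (by positivity)
      (fun n => by positivity) hΔ0 hΔ ?_
    filter_upwards [hend] with n ⟨hn, ha, hb⟩
    have hlow := (empSqDist_ge x n θ₀ (θs n) hr.le hn (hΘ n) hζ₀ ha hb).1
    rw [show (8 / r * s n + 4 * c / r) * Δ n = 4 * (2 * s n + c) * Δ n / r by ring,
      le_div_iff₀ hr]
    nlinarith [hQ n, sq_nonneg (|θ₀.1 - (θs n).1| - |θ₀.2.1 - (θs n).2.1|),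
      sq_abs (θ₀.1 - (θs n).1), sq_abs (θ₀.2.1 - (θs n).2.1)]
  refine squeeze_zero (fun n => Finset.expect_nonneg fun i _ => sq_nonneg _) hQ ?_
  simpa using ((hs.const_mul 2).add_const c).const_mul 2 |>.mul hΔ

lemma tendsto_of_tendsto_sub_of_sep {ζ₀ : ℝ}
    (hsep : ∀ ε > 0, ∃ δ > 0, ∀ ζ, ε ≤ |ζ - ζ₀| → δ ≤ F (max ζ ζ₀) - F (min ζ ζ₀))
    {ζ : ℕ → ℝ} (h : Tendsto (fun n => F (max (ζ n) ζ₀) - F (min (ζ n) ζ₀)) atTop (𝓝 0)) :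
    Tendsto ζ atTop (𝓝 ζ₀) := by
  refine Metric.tendsto_nhds.2 fun ε hε => ?_
  obtain ⟨δ, hδ, hsepε⟩ := hsep ε hε
  filter_upwards [h.eventually (eventually_lt_nhds hδ)] with n hn
  by_contra! hfar
  exact (hsepε _ (by rwa [← Real.dist_eq])).not_gt hn

theorem tendsto_of_expect_mfn_le (hζ₀ : θ₀.2.2 ∈ Icc a b) (hαβ : θ₀.1 ≠ θ₀.2.1)
    (hFa : 0 < F a) (hFb : F b < 1)
    (hsep : ∀ ε > 0, ∃ δ > 0, ∀ ζ, ε ≤ |ζ - θ₀.2.2| →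
      δ ≤ F (max ζ θ₀.2.2) - F (min ζ θ₀.2.2))
    (hA : ∀ ζ : ℕ → ℝ, (∀ n, ζ n ∈ Icc a b) →
      Tendsto (fun n => weightedEmpCdf 1 x n (ζ n) - F (ζ n)) atTop (𝓝 0))
    (hE : ∀ ζ : ℕ → ℝ, (∀ n, ζ n ∈ Icc a b) →
      Tendsto (fun n => weightedEmpCdf (epstil θ₀) x n (ζ n)) atTop (𝓝 0))
    (hT : Tendsto (fun n => 𝔼 i ∈ Finset.range n, epstil θ₀ (x i)) atTop (𝓝 0))
    (hΘ : ∀ n, (θs n).2.2 ∈ Icc a b)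
    (hmax : ∀ n, 𝔼 i ∈ Finset.range n, mfn θ₀ (x i) ≤ 𝔼 i ∈ Finset.range n, mfn (θs n) (x i)) :
    Tendsto θs atTop (𝓝 θ₀) := by
  have hab : a ≤ b := hζ₀.1.trans hζ₀.2
  have hAt : ∀ t ∈ Icc a b, Tendsto (fun n => weightedEmpCdf 1 x n t) atTop (𝓝 (F t)) :=
    fun t ht => tendsto_sub_nhds_zero_iff.1 (hA (fun _ => t) fun _ => ht)
  obtain ⟨r, hr, hend⟩ := exists_pos_eventually_weightedEmpCdf_endpoints hFa hFb
    (hAt a ⟨le_rfl, hab⟩) (hAt b ⟨hab, le_rfl⟩)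
  have hQ := tendsto_empSqDist_zero hr hζ₀ hend hE hT hΘ hmax
  have hlow := hend.mono fun n ⟨hn, ha, hb⟩ => empSqDist_ge x n θ₀ (θs n) hr.le hn (hΘ n) hζ₀ ha hb
  have hQr : Tendsto (fun n => empSqDist x n θ₀ (θs n) / r) atTop (𝓝 0) := by
    simpa using hQ.div_const r
  have hα : Tendsto (fun n => (θs n).1) atTop (𝓝 θ₀.1) := by
    refine tendsto_of_tendsto_sq_sub (squeeze_zero' (.of_forall fun n => sq_nonneg _) ?_ hQr)
    filter_upwards [hlow] with n hn
    rw [le_div_iff₀ hr]; nlinarith [hn.1, sq_nonneg (θ₀.2.1 - (θs n).2.1)]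
  have hβ : Tendsto (fun n => (θs n).2.1) atTop (𝓝 θ₀.2.1) := by
    refine tendsto_of_tendsto_sq_sub (squeeze_zero' (.of_forall fun n => sq_nonneg _) ?_ hQr)
    filter_upwards [hlow] with n hn
    rw [le_div_iff₀ hr]; nlinarith [hn.1, sq_nonneg (θ₀.1 - (θs n).1)]
  set ζ₁ := fun n => min (θs n).2.2 θ₀.2.2
  set ζ₂ := fun n => max (θs n).2.2 θ₀.2.2
  have hc : 0 < |θ₀.1 - θ₀.2.1| := abs_pos.2 (sub_ne_zero.2 hαβ)
  have hjump : ∀ᶠ n in atTop, |θ₀.1 - θ₀.2.1| / 2 ≤ |jump θ₀ (θs n)| := by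
    have hu := ((tendsto_const_nhds (x := θ₀.1)).sub hα).abs
    have hw := ((tendsto_const_nhds (x := θ₀.2.1)).sub hβ).abs
    simp only [sub_self, abs_zero] at hu hw
    filter_upwards [hu.eventually (eventually_lt_nhds (by positivity : 0 < |θ₀.1 - θ₀.2.1| / 4)),
      hw.eventually (eventually_lt_nhds (by positivity : 0 < |θ₀.1 - θ₀.2.1| / 4))] with n hun hwn
    linarith [abs_sub_le_abs_jump θ₀ (θs n)]
  -- a jump of size at least `|α₀ - β₀| / 2` on `(ζ₁, ζ₂]` forces that interval to lose its mass
  have hA₁₂ : Tendsto (fun n => weightedEmpCdf 1 x n (ζ₂ n) - weightedEmpCdf 1 x n (ζ₁ n))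
      atTop (𝓝 0) := by
    refine squeeze_zero' (.of_forall fun n => sub_nonneg.2 (weightedEmpCdf_mono zero_le_one x n
      min_le_max)) ?_ (hQ.div_const ((|θ₀.1 - θ₀.2.1| / 2) ^ 2) |>.trans (by simp))
    filter_upwards [hlow, hjump] with n hn hjn
    rw [le_div_iff₀ (by positivity)]
    nlinarith [hn.2, sub_nonneg.2 (weightedEmpCdf_mono zero_le_one x n (min_le_max :
      ζ₁ n ≤ ζ₂ n)), pow_le_pow_left₀ (by positivity) hjn 2, sq_abs (jump θ₀ (θs n))]
  have hF₁₂ : Tendsto (fun n => F (ζ₂ n) - F (ζ₁ n)) atTop (𝓝 0) := by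
    have h₁ := hA ζ₁ fun n => ⟨le_min (hΘ n).1 hζ₀.1, min_le_of_left_le (hΘ n).2⟩
    have h₂ := hA ζ₂ fun n => ⟨le_max_of_le_left (hΘ n).1, max_le (hΘ n).2 hζ₀.2⟩
    simpa using (hA₁₂.sub h₂).add h₁
  exact hα.prodMk_nhds (hβ.prodMk_nhds (tendsto_of_tendsto_sub_of_sep hsep hF₁₂))

end Consistency

lemma measurable_epstil (θ : ℝ × ℝ × ℝ) : Measurable (epstil θ) :=
  measurable_fst.sub (Measurable.ite (measurableSet_le measurable_snd measurable_const)
    measurable_const measurable_const)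

/-- The law of `(Y, Z)` with `Y = α₀ 1{Z ≤ ζ₀} + β₀ 1{Z > ζ₀} + ε`, `Z ∼ νZ` independent of
`ε ∼ νε`. -/
def changePointLaw (α₀ β₀ ζ₀ : ℝ) (νZ νε : Measure ℝ) : Measure (ℝ × ℝ) :=
  (νZ.prod νε).map fun p => ((if p.1 ≤ ζ₀ then α₀ else β₀) + p.2, p.1)

section ChangePointLaw

variable {α₀ β₀ ζ₀ : ℝ} {νZ νε : Measure ℝ} {g h : ℝ → ℝ}

lemma measurable_changePoint :
    Measurable fun p : ℝ × ℝ => ((if p.1 ≤ ζ₀ then α₀ else β₀) + p.2, p.1) :=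
  ((Measurable.ite (measurableSet_le measurable_fst measurable_const) measurable_const
    measurable_const).add measurable_snd).prodMk measurable_fst

lemma measurable_comp_epstil_mul (θ : ℝ × ℝ × ℝ) (hgm : Measurable g) (hhm : Measurable h) :
    Measurable fun p : ℝ × ℝ => g (epstil θ p) * h p.2 :=
  (hgm.comp (measurable_epstil θ)).mul (hhm.comp measurable_snd)

lemma integrable_changePointLaw [SFinite νZ] [SFinite νε] (hgm : Measurable g)
    (hg : Integrable g νε) (hhm : Measurable h) (hh : Integrable h νZ) :
    Integrable (fun p => g (epstil (α₀, β₀, ζ₀) p) * h p.2) (changePointLaw α₀ β₀ ζ₀ νZ νε) := by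
  rw [changePointLaw, integrable_map_measure
    (measurable_comp_epstil_mul _ hgm hhm).aestronglyMeasurable
    measurable_changePoint.aemeasurable]
  refine (hh.mul_prod hg).congr (.of_forall fun p => ?_)
  by_cases hp : p.1 ≤ ζ₀ <;> simp [epstil, hp, mul_comm]

lemma integral_changePointLaw [SFinite νZ] [SFinite νε] (hgm : Measurable g)
    (hhm : Measurable h) :
    ∫ p, g (epstil (α₀, β₀, ζ₀) p) * h p.2 ∂changePointLaw α₀ β₀ ζ₀ νZ νε =
      (∫ e, g e ∂νε) * ∫ z, h z ∂νZ := by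
  rw [changePointLaw, integral_map measurable_changePoint.aemeasurable
    (measurable_comp_epstil_mul _ hgm hhm).aestronglyMeasurable,
    mul_comm, ← integral_prod_mul]
  congr 1 with p
  by_cases hp : p.1 ≤ ζ₀ <;> simp [epstil, hp, mul_comm]

end ChangePointLaw

section Sampling

variable {Ω : Type*} [MeasurableSpace Ω] {P : Measure Ω} {α₀ β₀ ζ₀ : ℝ}
  {νZ νε : Measure ℝ} [IsProbabilityMeasure νZ] [IsProbabilityMeasure νε]
  {X : ℕ → Ω → ℝ × ℝ}

lemma ae_tendsto_weightedEmpCdf (hF : Continuous (cdf νZ)) (hX : ∀ i, Measurable (X i))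
    (hlaw : ∀ i, P.map (X i) = changePointLaw α₀ β₀ ζ₀ νZ νε) (hindep : iIndepFun X P)
    {g : ℝ → ℝ} (hg0 : 0 ≤ g) (hgm : Measurable g) (hg : Integrable g νε) (a b : ℝ) :
    ∀ᵐ ω ∂P, ∀ ζ : ℕ → ℝ, (∀ n, ζ n ∈ Icc a b) →
      Tendsto (fun n => weightedEmpCdf (fun p => g (epstil (α₀, β₀, ζ₀) p)) (X · ω) n (ζ n)
        - (∫ e, g e ∂νε) * cdf νZ (ζ n)) atTop (𝓝 0) := by
  have hind : ∀ t, Measurable ((Iic t).indicator (1 : ℝ → ℝ)) := fun t =>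
    measurable_const.indicator measurableSet_Iic
  have hint : ∀ t, ∫ p, g (epstil (α₀, β₀, ζ₀) p) * (Iic t).indicator 1 p.2
      ∂changePointLaw α₀ β₀ ζ₀ νZ νε = (∫ e, g e ∂νε) * cdf νZ t := fun t => by
    rw [integral_changePointLaw hgm (hind t), integral_indicator_one measurableSet_Iic,
      cdf_eq_real]
  have hG : Continuous fun t => (∫ e, g e ∂νε) * cdf νZ t := continuous_const.mul hF
  have h := ae_tendsto_expect_sub_integral_of_monotone hX hlaw hindep
    (k := fun t p => g (epstil (α₀, β₀, ζ₀) p) * (Iic t).indicator 1 p.2)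
    (fun p s t hst => mul_le_mul_of_nonneg_left
      (indicator_le_indicator_of_subset (Iic_subset_Iic.2 hst) (fun _ => zero_le_one) _) (hg0 _))
    (fun t => measurable_comp_epstil_mul _ hgm (hind t))
    (fun t => integrable_changePointLaw hgm hg (hind t)
      ((integrable_const 1).indicator measurableSet_Iic))
    (a := a) (b := b) (by simpa only [hint] using hG.continuousOn)
  simpa only [hint, weightedEmpCdf] using h

lemma ae_tendsto_weightedEmpCdf_epstil (hF : Continuous (cdf νZ)) (hX : ∀ i, Measurable (X i))
    (hlaw : ∀ i, P.map (X i) = changePointLaw α₀ β₀ ζ₀ νZ νε) (hindep : iIndepFun X P)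
    (hε : Integrable (fun e => e) νε) (hεmean : ∫ e, e ∂νε = 0) (a b : ℝ) :
    ∀ᵐ ω ∂P, ∀ ζ : ℕ → ℝ, (∀ n, ζ n ∈ Icc a b) →
      Tendsto (fun n => weightedEmpCdf (epstil (α₀, β₀, ζ₀)) (X · ω) n (ζ n)) atTop (𝓝 0) := by
  have hpos := ae_tendsto_weightedEmpCdf hF hX hlaw hindep (g := fun e => max e 0)
    (fun e => le_max_right e 0) (measurable_id.max measurable_const) hε.pos_part a b
  have hneg := ae_tendsto_weightedEmpCdf hF hX hlaw hindep (g := fun e => max (-e) 0)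
    (fun e => le_max_right (-e) 0) (measurable_id.neg.max measurable_const) hε.neg_part a b
  have hmean : ∫ e, max e 0 ∂νε = ∫ e, max (-e) 0 ∂νε := by
    rw [← sub_eq_zero, ← integral_sub hε.pos_part hε.neg_part]
    simpa only [max_zero_sub_max_neg_zero_eq_self] using hεmean
  filter_upwards [hpos, hneg] with ω hωpos hωneg ζ hζ
  convert (hωpos ζ hζ).sub (hωneg ζ hζ) using 1
  · ext n
    simp only [weightedEmpCdf, hmean, sub_sub_sub_cancel_right, ← Finset.expect_sub_distrib,
      ← sub_mul, max_zero_sub_max_neg_zero_eq_self]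
  · simp

lemma ae_tendsto_of_expect_mfn_le {a b : ℝ} (hF : Continuous (cdf νZ))
    (hζ₀ : ζ₀ ∈ Icc a b) (hαβ : α₀ ≠ β₀) (hFa : 0 < cdf νZ a) (hFb : cdf νZ b < 1)
    (hsep : ∀ ε > 0, ∃ δ > 0, ∀ ζ, ε ≤ |ζ - ζ₀| → δ ≤ cdf νZ (max ζ ζ₀) - cdf νZ (min ζ ζ₀))
    (hε : Integrable (fun e => e) νε) (hεmean : ∫ e, e ∂νε = 0) (hX : ∀ i, Measurable (X i))
    (hlaw : ∀ i, P.map (X i) = changePointLaw α₀ β₀ ζ₀ νZ νε) (hindep : iIndepFun X P) :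
    ∀ᵐ ω ∂P, ∀ θs : ℕ → ℝ × ℝ × ℝ, (∀ n, (θs n).2.2 ∈ Icc a b) →
      (∀ n, 𝔼 i ∈ Finset.range n, mfn (α₀, β₀, ζ₀) (X i ω)
        ≤ 𝔼 i ∈ Finset.range n, mfn (θs n) (X i ω)) →
      Tendsto θs atTop (𝓝 (α₀, β₀, ζ₀)) := by
  have hεint : Integrable (epstil (α₀, β₀, ζ₀)) (changePointLaw α₀ β₀ ζ₀ νZ νε) := by
    simpa using integrable_changePointLaw measurable_id hε measurable_const (integrable_const 1)
  have hεlaw : ∫ p, epstil (α₀, β₀, ζ₀) p ∂changePointLaw α₀ β₀ ζ₀ νZ νε = 0 := by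
    simpa [hεmean] using integral_changePointLaw (α₀ := α₀) (β₀ := β₀) (ζ₀ := ζ₀) (νZ := νZ)
      (νε := νε) measurable_id (measurable_const (a := (1 : ℝ)))
  filter_upwards [ae_tendsto_weightedEmpCdf hF hX hlaw hindep (g := fun _ => 1)
      (fun _ => zero_le_one) measurable_const (integrable_const 1) a b,
    ae_tendsto_weightedEmpCdf_epstil hF hX hlaw hindep hε hεmean a b,
    ae_tendsto_expect_comp hX hlaw hindep (measurable_epstil _) hεint]
    with ω hA hE hT θs hΘ hmax
  exact tendsto_of_expect_mfn_le hζ₀ hαβ hFa hFb hsep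
    (fun ζ hζ => by simpa [Pi.one_def] using hA ζ hζ) hE
    (hεlaw ▸ hT) hΘ hmax

end Sampling

lemma expect_range_eq_inv_mul_sum (f : ℕ → ℝ) (n : ℕ) :
    𝔼 i ∈ Finset.range n, f i = (n : ℝ)⁻¹ * ∑ i ∈ Finset.range n, f i := by
  rw [Finset.expect_eq_sum_div_card, Finset.card_range, div_eq_inv_mul]

theorem stmt7_general
    {Ω : Type} [MeasurableSpace Ω] (P : Measure Ω)
    -- model parameters
    (α₀ β₀ a b ζ₀ : ℝ) (f : ℝ → ℝ)
    (νZ νε : Measure ℝ) [IsProbabilityMeasure νZ] [IsProbabilityMeasure νε]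
    (ℙd : Measure (ℝ × ℝ))
    (hζ₀ : ζ₀ ∈ Icc a b) (hαβ : α₀ ≠ β₀)
    -- `Z` has a bounded density `f`, positive on `[a,b]`, bounded away from `0` near `ζ₀`
    (hνZ : νZ = volume.withDensity (fun z => ENNReal.ofReal (f z)))
    (hfloc : ∃ η₀ > (0 : ℝ), ∃ κ > (0 : ℝ), ∀ z, |z - ζ₀| ≤ η₀ → κ < f z)
    (hZa : 0 < νZ (Iio a)) (hZb : 0 < νZ (Ioi b))
    -- `ε` has a continuous distribution, mean `0`, variance `σ² > 0`, finite third moment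
    (hεmean : ∫ x, x ∂νε = 0)
    (hεL2 : Integrable (fun x => x ^ 2) νε)
    -- `ℙd` is the law of `(Y, Z)` with `Y = α₀·1{Z≤ζ₀} + β₀·1{Z>ζ₀} + ε`, `ε ⟂ Z`
    (hℙd : ℙd = Measure.map
      (fun p : ℝ × ℝ => ((if p.1 ≤ ζ₀ then α₀ else β₀) + p.2, p.1)) (νZ.prod νε))
    -- i.i.d. data `(X_i) = (Y_i, Z_i)` with law `ℙd`
    (Xd : ℕ → Ω → ℝ × ℝ) (hXdMeas : ∀ i, Measurable (Xd i))
    (hXdLaw : ∀ i, Measure.map (Xd i) P = ℙd)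
    (hXdIndep : ProbabilityTheory.iIndepFun Xd P)
    -- the least squares estimator `θ̂_n = (α̂_n, β̂_n, ζ̂_n)`, a measurable maximizer
    -- of `M_n` over `Θ = ℝ² × [a,b]`
    (θhat : ℕ → Ω → ℝ × ℝ × ℝ)
    (hθhatMax : ∀ n, ∀ᵐ ω ∂P, (θhat n ω).2.2 ∈ Icc a b ∧
      ∀ θ : ℝ × ℝ × ℝ, θ.2.2 ∈ Icc a b →
        (n : ℝ)⁻¹ * ∑ i ∈ Finset.range n, mfn θ (Xd i ω)
          ≤ (n : ℝ)⁻¹ * ∑ i ∈ Finset.range n, mfn (θhat n ω) (Xd i ω)) :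
    -- conclusion
    (∀ᵐ ω ∂P, ∀ θs : ℕ → ℝ × ℝ × ℝ,
      (∀ n, (θs n).2.2 ∈ Icc a b ∧
        ∀ θ : ℝ × ℝ × ℝ, θ.2.2 ∈ Icc a b →
          (n : ℝ)⁻¹ * ∑ i ∈ Finset.range n, mfn θ (Xd i ω)
            ≤ (n : ℝ)⁻¹ * ∑ i ∈ Finset.range n, mfn (θs n) (Xd i ω)) →
      Tendsto θs atTop (nhds (α₀, β₀, ζ₀))) ∧
    (∀ᵐ ω ∂P, Tendsto (fun n => θhat n ω) atTop (nhds (α₀, β₀, ζ₀))) := by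
  obtain ⟨η₀, hη₀, κ, hκ, hfκ⟩ := hfloc
  have : NullSingletonClass νZ := by rw [hνZ]; infer_instance
  have hε : Integrable (fun e => e) νε :=
    ((memLp_two_iff_integrable_sq aestronglyMeasurable_id).2 hεL2).integrable one_le_two
  have hconv := ae_tendsto_of_expect_mfn_le (continuous_cdf νZ) hζ₀ hαβ
    (cdf_pos_of_measure_Iio_pos hZa) (cdf_lt_one_of_measure_Ioi_pos hZb)
    (exists_le_cdf_sub_of_le_abs hνZ hη₀ hκ hfκ) hε hεmean hXdMeas
    (fun i => (hXdLaw i).trans hℙd) hXdIndep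
  simp only [expect_range_eq_inv_mul_sum] at hconv
  refine ⟨?_, ?_⟩
  · filter_upwards [hconv] with ω hω θs hθs
    exact hω θs (fun n => (hθs n).1) fun n => (hθs n).2 _ hζ₀
  · filter_upwards [hconv, ae_all_iff.2 hθhatMax] with ω hω hmax
    exact hω _ (fun n => (hmax n).1) fun n => (hmax n).2 _ hζ₀

/-- Lemma 4.1(iii): almost surely, every sequence of maximizers of the empirical
criterion `M_n` over `Θ` converges to `θ₀`; in particular the least squares estimator
`θ̂_n` converges to `θ₀` almost surely. -/
theorem stmt7
    {Ω : Type} [MeasurableSpace Ω] (P : Measure Ω) [IsProbabilityMeasure P]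
    -- model parameters
    (α₀ β₀ a b ζ₀ σ2 Mbd : ℝ) (f : ℝ → ℝ)
    (νZ νε : Measure ℝ) [IsProbabilityMeasure νZ] [IsProbabilityMeasure νε]
    (ℙd : Measure (ℝ × ℝ))
    (hab : a < b) (hζ₀ : ζ₀ ∈ Icc a b) (hαβ : α₀ ≠ β₀)
    -- `Z` has a bounded density `f`, positive on `[a,b]`, bounded away from `0` near `ζ₀`
    (hνZ : νZ = volume.withDensity (fun z => ENNReal.ofReal (f z)))
    (hfbd : ∃ C, ∀ z, f z ≤ C)
    (hfpos : ∀ z ∈ Icc a b, 0 < f z)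
    (hfloc : ∃ η₀ > (0 : ℝ), ∃ κ > (0 : ℝ), ∀ z, |z - ζ₀| ≤ η₀ → κ < f z)
    (hZa : 0 < νZ (Iio a)) (hZb : 0 < νZ (Ioi b))
    -- `ε` has a continuous distribution, mean `0`, variance `σ² > 0`, finite third moment
    (hεcont : ∀ x : ℝ, νε {x} = 0)
    (hεmean : ∫ x, x ∂νε = 0)
    (hεL2 : Integrable (fun x => x ^ 2) νε)
    (hεvar : ∫ x, x ^ 2 ∂νε = σ2) (hσ : 0 < σ2)
    (hεL3 : Integrable (fun x => |x| ^ 3) νε)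
    -- `ℙd` is the law of `(Y, Z)` with `Y = α₀·1{Z≤ζ₀} + β₀·1{Z>ζ₀} + ε`, `ε ⟂ Z`
    (hℙd : ℙd = Measure.map
      (fun p : ℝ × ℝ => ((if p.1 ≤ ζ₀ then α₀ else β₀) + p.2, p.1)) (νZ.prod νε))
    -- i.i.d. data `(X_i) = (Y_i, Z_i)` with law `ℙd`
    (Xd : ℕ → Ω → ℝ × ℝ) (hXdMeas : ∀ i, Measurable (Xd i))
    (hXdLaw : ∀ i, Measure.map (Xd i) P = ℙd)
    (hXdIndep : ProbabilityTheory.iIndepFun Xd P)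
    -- the least squares estimator `θ̂_n = (α̂_n, β̂_n, ζ̂_n)`, a measurable maximizer
    -- of `M_n` over `Θ = ℝ² × [a,b]`
    (θhat : ℕ → Ω → ℝ × ℝ × ℝ) (hθhatMeas : ∀ n, Measurable (θhat n))
    (hθhatMax : ∀ n, ∀ᵐ ω ∂P, (θhat n ω).2.2 ∈ Icc a b ∧
      ∀ θ : ℝ × ℝ × ℝ, θ.2.2 ∈ Icc a b →
        (n : ℝ)⁻¹ * ∑ i ∈ Finset.range n, mfn θ (Xd i ω)
          ≤ (n : ℝ)⁻¹ * ∑ i ∈ Finset.range n, mfn (θhat n ω) (Xd i ω)) :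
    -- conclusion
    (∀ᵐ ω ∂P, ∀ θs : ℕ → ℝ × ℝ × ℝ,
      (∀ n, (θs n).2.2 ∈ Icc a b ∧
        ∀ θ : ℝ × ℝ × ℝ, θ.2.2 ∈ Icc a b →
          (n : ℝ)⁻¹ * ∑ i ∈ Finset.range n, mfn θ (Xd i ω)
            ≤ (n : ℝ)⁻¹ * ∑ i ∈ Finset.range n, mfn (θs n) (Xd i ω)) →
      Tendsto θs atTop (nhds (α₀, β₀, ζ₀))) ∧
    (∀ᵐ ω ∂P, Tendsto (fun n => θhat n ω) atTop (nhds (α₀, β₀, ζ₀))) :=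
  stmt7_general P α₀ β₀ a b ζ₀ f νZ νε ℙd hζ₀ hαβ hνZ hfloc hZa hZb hεmean hεL2 hℙd Xd hXdMeas
    hXdLaw hXdIndep θhat hθhatMax
end
end

section
/- Let s < t be real numbers. Then the sequence of random variables W_n = n·ℙ_n(1{ζ₀ + s/n < Z ≤ ζ₀ + t/n}) = #{i ≤ n : ζ₀ + s/n < Z_i ≤ ζ₀ + t/n} does not converge in probability: there exists no random variable V such that P(|W_n − V| > ε) → 0 for every ε > 0. (Lemma 4.5(i).) -/
/-!
If the counts `W n` converged in probability, then so would `W (2 * n) - W n → 0`. But the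
event that none of `Z 0, …, Z (n - 1)` falls into the window `Iₙ = (ζ₀ + s/n, ζ₀ + t/n]` (so
`W n = 0`) while one of `Z n, …, Z (2n - 1)` falls into `I₂ₙ` (so `W (2 * n) ≥ 1`) has
probability `(1 - μ Iₙ)ⁿ (1 - (1 - μ I₂ₙ)ⁿ)` by independence. Since `n μ Iₙ → r = (t - s) f(ζ₀)`
by differentiability of the CDF, this tends to `e^{-r} (1 - e^{-r/2}) > 0`.
-/

open MeasureTheory Filter Set Topology ProbabilityTheory

theorem HasDerivAt.tendsto_nat_mul_sub {F : ℝ → ℝ} {f x : ℝ} (hF : HasDerivAt F f x) (c : ℝ) :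
    Tendsto (fun n : ℕ => n * (F (x + c / n) - F x)) atTop (𝓝 (c * f)) := by
  have hG : HasDerivAt (fun h => F (x + c * h)) (f * c) 0 :=
    hF.comp_of_eq 0 (((hasDerivAt_id 0).const_mul c).const_add x) (by simp) |>.congr_deriv (by simp)
  have hinv : Tendsto (fun n : ℕ => (n : ℝ)⁻¹) atTop (𝓝[≠] 0) :=
    (tendsto_inv_atTop_nhdsGT_zero.mono_right (nhdsWithin_mono _ fun _ h => ne_of_gt h)).comp
      tendsto_natCast_atTop_atTop
  rw [mul_comm c]
  refine ((hasDerivAt_iff_tendsto_slope_zero.mp hG).comp hinv).congr fun n => ?_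
  simp [div_eq_mul_inv]

theorem tendsto_one_sub_pow_of_tendsto_nat_mul {a : ℕ → ℝ} {r : ℝ}
    (h : Tendsto (fun n : ℕ => n * a n) atTop (𝓝 r)) :
    Tendsto (fun n => (1 - a n) ^ n) atTop (𝓝 (Real.exp (-r))) := by
  simpa [sub_eq_add_neg] using Real.tendsto_one_add_pow_exp_of_tendsto (g := fun n => -a n)
    (by simpa using h.neg)

theorem measureReal_Ioc_eq_sub {μ : Measure ℝ} [IsFiniteMeasure μ] {a b : ℝ} (hab : a ≤ b) :
    μ.real (Ioc a b) = μ.real (Iic b) - μ.real (Iic a) := by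
  rw [← Iic_union_Ioc_eq_Iic hab, measureReal_union (Iic_disjoint_Ioc le_rfl) measurableSet_Ioc]
  ring

theorem tendsto_nat_mul_measureReal_Ioc {μ : Measure ℝ} [IsFiniteMeasure μ] {f x s t : ℝ}
    (hF : HasDerivAt (fun z => μ.real (Iic z)) f x) (hst : s ≤ t) :
    Tendsto (fun n : ℕ => n * μ.real (Ioc (x + s / n) (x + t / n))) atTop (𝓝 ((t - s) * f)) := by
  rw [sub_mul]
  refine ((hF.tendsto_nat_mul_sub t).sub (hF.tendsto_nat_mul_sub s)).congr fun n => ?_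
  rw [measureReal_Ioc_eq_sub (by gcongr)]
  ring

section Counting

variable {Ω β : Type*}

def missThenHit (Z : ℕ → Ω → β) (I J : Set β) (n m : ℕ) : Set Ω :=
  (⋂ i ∈ Finset.range n, Z i ⁻¹' Iᶜ) \ ⋂ i ∈ Finset.Ico n m, Z i ⁻¹' Jᶜ

theorem missThenHit_subset (Z : ℕ → Ω → β) (I J : Set β) (n m : ℕ) :
    missThenHit Z I J n m ⊆ {ω | 1 ≤ ∑ i ∈ Finset.range m, J.indicator (fun _ => (1 : ℝ)) (Z i ω)
      - ∑ i ∈ Finset.range n, I.indicator (fun _ => (1 : ℝ)) (Z i ω)} := by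
  rintro ω ⟨hmiss, hhit⟩
  have hzero : ∑ i ∈ Finset.range n, I.indicator (fun _ => (1 : ℝ)) (Z i ω) = 0 :=
    Finset.sum_eq_zero fun i hi => indicator_of_notMem (mem_iInter₂.mp hmiss i hi) _
  obtain ⟨i, -, him, hiJ⟩ : ∃ i, n ≤ i ∧ i < m ∧ Z i ω ∈ J := by
    simpa [mem_iInter₂] using hhit
  have hone : 1 ≤ ∑ i ∈ Finset.range m, J.indicator (fun _ => (1 : ℝ)) (Z i ω) :=
    calc (1 : ℝ) = J.indicator (fun _ => 1) (Z i ω) :=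
          (indicator_of_mem hiJ (fun _ => (1 : ℝ))).symm
      _ ≤ ∑ j ∈ Finset.range m, J.indicator (fun _ => 1) (Z j ω) :=
        Finset.single_le_sum (f := fun j => J.indicator (fun _ => (1 : ℝ)) (Z j ω))
          (fun j _ => indicator_nonneg (fun _ _ => zero_le_one) _)
          (Finset.mem_range.mpr him)
  simpa [hzero] using hone

end Counting

section

variable {Ω : Type*} [MeasurableSpace Ω] {P : Measure Ω}

theorem tendsto_measure_lt_abs_sub_comp {W : ℕ → Ω → ℝ} {V : Ω → ℝ}
    (hW : ∀ ε > 0, Tendsto (fun n => P {ω | ε < |W n ω - V ω|}) atTop (𝓝 0))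
    {φ : ℕ → ℕ} (hφ : Tendsto φ atTop atTop) {ε : ℝ} (hε : 0 < ε) :
    Tendsto (fun n => P {ω | 2 * ε < |W (φ n) ω - W n ω|}) atTop (𝓝 0) := by
  have hsub : ∀ n, {ω | 2 * ε < |W (φ n) ω - W n ω|} ⊆
      {ω | ε < |W (φ n) ω - V ω|} ∪ {ω | ε < |W n ω - V ω|} := by
    intro n ω (hω : 2 * ε < |W (φ n) ω - W n ω|)
    by_contra! h
    have h₁ : |W (φ n) ω - V ω| ≤ ε := not_lt.mp fun h' => h (Or.inl h')
    have h₂ : |W n ω - V ω| ≤ ε := not_lt.mp fun h' => h (Or.inr h')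
    linarith [abs_sub_le (W (φ n) ω) (V ω) (W n ω), abs_sub_comm (V ω) (W n ω)]
  have hsum := ((hW ε hε).comp hφ).add (hW ε hε)
  rw [add_zero] at hsum
  exact tendsto_of_tendsto_of_tendsto_of_le_of_le tendsto_const_nhds hsum (fun _ => zero_le)
    fun n => (measure_mono (hsub n)).trans (measure_union_le _ _)

variable {β ι : Type*} [MeasurableSpace β] {μ : Measure β}

theorem measureReal_biInter_preimage {Z : ι → Ω → β} (hind : iIndepFun Z P)
    (hZ : ∀ i, AEMeasurable (Z i) P) (hlaw : ∀ i, P.map (Z i) = μ) (S : Finset ι)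
    {B : ι → Set β} (hB : ∀ i ∈ S, MeasurableSet (B i)) :
    P.real (⋂ i ∈ S, Z i ⁻¹' B i) = ∏ i ∈ S, μ.real (B i) := by
  rw [measureReal_def, hind.measure_inter_preimage_eq_mul S hB, ENNReal.toReal_prod]
  refine Finset.prod_congr rfl fun i hi => ?_
  rw [← hlaw i, measureReal_def, Measure.map_apply₀ (hZ i) (hB i hi).nullMeasurableSet]

theorem measureReal_missThenHit [IsFiniteMeasure P] [IsProbabilityMeasure μ] {Z : ℕ → Ω → β}
    (hind : iIndepFun Z P) (hZ : ∀ i, AEMeasurable (Z i) P) (hlaw : ∀ i, P.map (Z i) = μ)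
    {I J : Set β} (hI : MeasurableSet I) (hJ : MeasurableSet J) {n m : ℕ} (hnm : n ≤ m) :
    P.real (missThenHit Z I J n m) = (1 - μ.real I) ^ n * (1 - (1 - μ.real J) ^ (m - n)) := by
  set B : ℕ → Set β := fun i => if i < n then Iᶜ else Jᶜ
  have hB : ∀ i ∈ Finset.range m, MeasurableSet (B i) := fun i _ => by
    dsimp only [B]; split_ifs <;> measurability
  have hlow : ∀ i ∈ Finset.range n, B i = Iᶜ := fun i hi => if_pos (Finset.mem_range.mp hi)
  have hhigh : ∀ i ∈ Finset.Ico n m, B i = Jᶜ := fun i hi =>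
    if_neg (not_lt.mpr (Finset.mem_Ico.mp hi).1)
  have hrange : Finset.range n ∪ Finset.Ico n m = Finset.range m := by
    rw [Finset.range_eq_Ico, Finset.range_eq_Ico, Finset.Ico_union_Ico_eq_Ico n.zero_le hnm]
  have hmiss : P.real (⋂ i ∈ Finset.range n, Z i ⁻¹' Iᶜ) = (1 - μ.real I) ^ n := by
    rw [measureReal_biInter_preimage hind hZ hlaw _ fun _ _ => hI.compl, Finset.prod_const,
      Finset.card_range, probReal_compl_eq_one_sub hI]
  have hboth : (⋂ i ∈ Finset.range n, Z i ⁻¹' Iᶜ) ∩ ⋂ i ∈ Finset.Ico n m, Z i ⁻¹' Jᶜ =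
      ⋂ i ∈ Finset.range m, Z i ⁻¹' B i := by
    rw [iInter₂_congr fun i hi => congrArg (Z i ⁻¹' ·) (hlow i hi).symm,
      iInter₂_congr fun i hi => congrArg (Z i ⁻¹' ·) (hhigh i hi).symm,
      ← Finset.set_biInter_inter, hrange]
  have hprod : ∏ i ∈ Finset.range m, μ.real (B i) =
      (1 - μ.real I) ^ n * (1 - μ.real J) ^ (m - n) := by
    rw [← Finset.prod_range_mul_prod_Ico _ hnm,
      Finset.prod_congr rfl fun i hi => congrArg _ (hlow i hi),
      Finset.prod_congr rfl fun i hi => congrArg _ (hhigh i hi), Finset.prod_const,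
      Finset.prod_const, Finset.card_range, Nat.card_Ico, probReal_compl_eq_one_sub hI,
      probReal_compl_eq_one_sub hJ]
  have hnull : NullMeasurableSet (⋂ i ∈ Finset.Ico n m, Z i ⁻¹' Jᶜ) P :=
    .biInter (Finset.Ico n m).countable_toSet fun i _ => (hZ i).nullMeasurableSet_preimage hJ.compl
  have hsplit := measureReal_inter_add_sdiff₀ (s := ⋂ i ∈ Finset.range n, Z i ⁻¹' Iᶜ) hnull
  rw [hboth, measureReal_biInter_preimage hind hZ hlaw _ hB, hprod, hmiss] at hsplit
  rw [missThenHit]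
  linear_combination hsplit

end

theorem stmt10_general {Ω : Type} [MeasurableSpace Ω] (P : Measure Ω) [IsProbabilityMeasure P]
    (Z : ℕ → Ω → ℝ)
    (μZ : Measure ℝ) [IsProbabilityMeasure μZ]
    (hZlaw : ∀ i, Measure.map (Z i) P = μZ)
    (hZindep : ProbabilityTheory.iIndepFun Z P)
    (ζ₀ fz : ℝ)
    (hderiv : HasDerivAt (fun z => (μZ (Set.Iic z)).toReal) fz ζ₀)
    (hfz : 0 < fz) (s t : ℝ) (hst : s < t) :
    ¬ ∃ V : Ω → ℝ, Measurable V ∧ ∀ ε > (0 : ℝ),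
      Tendsto (fun n : ℕ => P {ω | ε <
        |(∑ i ∈ Finset.range n, (Set.Ioc (ζ₀ + s / n) (ζ₀ + t / n)).indicator
          (fun _ => (1 : ℝ)) (Z i ω)) - V ω|}) atTop (nhds 0) := by
  rintro ⟨V, -, hV⟩
  set I : ℕ → Set ℝ := fun n => Ioc (ζ₀ + s / n) (ζ₀ + t / n)
  set E : ℕ → Set Ω := fun n => missThenHit Z (I n) (I (2 * n)) n (2 * n)
  set r := (t - s) * fz
  -- `Measure.map` of a function that is not a.e.-measurable is `0`, and `μZ ≠ 0`.
  have hZ : ∀ i, AEMeasurable (Z i) P := fun i =>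
    .of_map_ne_zero (by rw [hZlaw]; exact IsProbabilityMeasure.ne_zero μZ)
  have hdouble : Tendsto (2 * ·) atTop atTop := tendsto_id.const_mul_atTop' two_pos
  have hI : Tendsto (fun n : ℕ => n * μZ.real (I n)) atTop (𝓝 r) :=
    tendsto_nat_mul_measureReal_Ioc hderiv hst.le
  have hI₂ : Tendsto (fun n : ℕ => n * μZ.real (I (2 * n))) atTop (𝓝 (r / 2)) := by
    refine ((hI.comp hdouble).div_const 2).congr fun n => ?_
    simp only [Function.comp_apply, Nat.cast_mul, Nat.cast_ofNat]
    ring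
  have hlim : Tendsto (fun n => P.real (E n)) atTop
      (𝓝 (Real.exp (-r) * (1 - Real.exp (-(r / 2))))) := by
    refine ((tendsto_one_sub_pow_of_tendsto_nat_mul hI).mul (tendsto_const_nhds.sub
      (tendsto_one_sub_pow_of_tendsto_nat_mul hI₂))).congr fun n => ?_
    rw [measureReal_missThenHit hZindep hZ hZlaw measurableSet_Ioc measurableSet_Ioc (by omega),
      show 2 * n - n = n by omega]
  have hzero : Tendsto (fun n => P.real (E n)) atTop (𝓝 0) := by
    refine (ENNReal.tendsto_toReal_zero_iff fun _ => measure_ne_top P _).mpr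
      (tendsto_of_tendsto_of_tendsto_of_le_of_le tendsto_const_nhds
        (tendsto_measure_lt_abs_sub_comp hV hdouble (by norm_num : (0 : ℝ) < 1 / 4))
        (fun _ => zero_le) fun n => measure_mono fun ω hω => ?_)
    have hjump := missThenHit_subset Z _ _ _ _ hω
    exact (by norm_num : (2 * (1 / 4) : ℝ) < 1).trans_le (hjump.trans (le_abs_self _))
  have hpos : 0 < Real.exp (-r) * (1 - Real.exp (-(r / 2))) := by
    have : 0 < r := mul_pos (sub_pos.mpr hst) hfz
    have := Real.exp_lt_one_iff.mpr (by linarith : -(r / 2) < 0)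
    positivity
  exact hpos.ne' (tendsto_nhds_unique hlim hzero)

/-- Lemma 4.5(i): for i.i.d. real random variables whose common CDF is differentiable
at `ζ₀` with positive derivative, the counts `#{i ≤ n : ζ₀ + s/n < Z_i ≤ ζ₀ + t/n}`
do not converge in probability to any random variable. -/
theorem stmt10 {Ω : Type} [MeasurableSpace Ω] (P : Measure Ω) [IsProbabilityMeasure P]
    (Z : ℕ → Ω → ℝ) (hZmeas : ∀ i, Measurable (Z i))
    (μZ : Measure ℝ) [IsProbabilityMeasure μZ]
    (hZlaw : ∀ i, Measure.map (Z i) P = μZ)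
    (hZindep : ProbabilityTheory.iIndepFun Z P)
    (ζ₀ fz : ℝ)
    (hderiv : HasDerivAt (fun z => (μZ (Set.Iic z)).toReal) fz ζ₀)
    (hfz : 0 < fz) (s t : ℝ) (hst : s < t) :
    ¬ ∃ V : Ω → ℝ, Measurable V ∧ ∀ ε > (0 : ℝ),
      Tendsto (fun n : ℕ => P {ω | ε <
        |(∑ i ∈ Finset.range n, (Set.Ioc (ζ₀ + s / n) (ζ₀ + t / n)).indicator
          (fun _ => (1 : ℝ)) (Z i ω)) - V ω|}) atTop (nhds 0) :=
  stmt10_general P Z μZ hZlaw hZindep ζ₀ fz hderiv hfz s t hst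
end

section
/- Let B > 0 and ρ ∈ (0, 1/2). For λ > 0, set L^ρ_{λ+B} = min{n ∈ ℕ : H_{λ+B}(n) > ρ} and U^ρ_λ = max{n ∈ ℕ : 1 − H_λ(n) > ρ}. Then there exists λ* > 0 such that L^ρ_{λ+B} < U^ρ_λ for all λ ≥ λ*. (Lemma A.9: separation of lower and upper Poisson quantiles for large intensity.) -/
open Filter

/-- The CDF of the Poisson distribution with mean `lam`, evaluated at `n`. -/
noncomputable def poissonCDF (lam : ℝ) (n : ℕ) : ℝ :=
  Real.exp (-lam) * ∑ k ∈ Finset.range (n + 1), lam ^ k / (Nat.factorial k)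

/-!
Write `p_k(μ) = e^{-μ} μ^k / k!`. Stirling's bound `n! ≥ √(2πn) (n/e)^n`, applied at the mode
`⌊μ⌋` of `k ↦ p_k(μ)`, gives `p_k(μ) ≤ 1/√(πμ)` for `μ ≥ 1`. Two consequences: since
`∂_μ H_μ(n) = -p_n(μ)`, shifting the intensity by `B` moves every `H_μ(n)` by at most `B/√(πλ)`;
and at the lower quantile `L = L^ρ_{λ+B}` the CDF has only climbed to
`H_{λ+B}(L + 1) ≤ ρ + 2/√(πλ)`.
Hence `H_λ(L + 1) ≤ ρ + (2 + B)/√(πλ) < 1 - ρ` once `λ` is large, i.e. `L + 1 ≤ U^ρ_λ`.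
-/

open Real Nat Topology

noncomputable def poissonTerm (μ : ℝ) (k : ℕ) : ℝ :=
  exp (-μ) * (μ ^ k / k !)

lemma poissonTerm_nonneg {μ : ℝ} (hμ : 0 ≤ μ) (k : ℕ) : 0 ≤ poissonTerm μ k := by
  unfold poissonTerm
  positivity

lemma poissonCDF_zero (μ : ℝ) : poissonCDF μ 0 = poissonTerm μ 0 := by
  simp [poissonCDF, poissonTerm]

lemma poissonCDF_succ (μ : ℝ) (n : ℕ) :
    poissonCDF μ (n + 1) = poissonCDF μ n + poissonTerm μ (n + 1) := by
  rw [poissonCDF, Finset.sum_range_succ, mul_add, ← poissonCDF, poissonTerm]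

lemma tendsto_poissonCDF_atTop (μ : ℝ) : Tendsto (poissonCDF μ) atTop (𝓝 1) := by
  have hsum : Tendsto (fun n ↦ ∑ k ∈ Finset.range (n + 1), μ ^ k / k !) atTop (𝓝 (exp μ)) := by
    have hexp : HasSum (fun k ↦ μ ^ k / k !) (exp μ) := by
      simpa [Real.exp_eq_exp_ℝ] using NormedSpace.expSeries_div_hasSum_exp μ
    exact hexp.tendsto_sum_nat.comp (tendsto_add_atTop_nat 1)
  have h := hsum.const_mul (exp (-μ))
  rwa [← exp_add, neg_add_cancel, exp_zero] at h

lemma hasDerivAt_poissonCDF (n : ℕ) (t : ℝ) :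
    HasDerivAt (poissonCDF · n) (-poissonTerm t n) t := by
  have hsum : HasDerivAt (fun s : ℝ ↦ ∑ k ∈ Finset.range (n + 1), s ^ k / k !)
      (∑ k ∈ Finset.range n, t ^ k / k !) t := by
    refine (HasDerivAt.fun_sum (u := Finset.range (n + 1))
      fun k _ ↦ (hasDerivAt_pow k t).div_const (k ! : ℝ)).congr_deriv ?_
    rw [Finset.sum_range_succ', Nat.cast_zero, zero_mul, zero_div, add_zero]
    refine Finset.sum_congr rfl fun j _ ↦ ?_
    rw [factorial_succ]
    push_cast
    field_simp
  refine ((hasDerivAt_neg t).exp.fun_mul hsum).congr_deriv ?_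
  rw [poissonTerm, Finset.sum_range_succ]
  ring

lemma pow_div_factorial_le_floor {μ : ℝ} (hμ : 0 ≤ μ) (k : ℕ) :
    μ ^ k / k ! ≤ μ ^ ⌊μ⌋₊ / ⌊μ⌋₊ ! := by
  set f : ℕ → ℝ := fun k ↦ μ ^ k / (k)!
  have hf : ∀ n, f (n + 1) = f n * (μ / (n + 1)) := fun n ↦ by
    simp only [f, factorial_succ, pow_succ]
    push_cast
    field_simp
  rcases le_total k ⌊μ⌋₊ with hk | hk
  · refine monotoneOn_of_le_succ (f := f) Set.ordConnected_Iic (fun n _ _ hn ↦ ?_)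
      (Set.mem_Iic.2 hk) Set.self_mem_Iic hk
    rw [Order.succ_eq_add_one, Set.mem_Iic, le_floor_iff hμ] at hn
    rw [Order.succ_eq_add_one, hf]
    exact le_mul_of_one_le_right (by positivity)
      ((one_le_div (by positivity)).2 (by exact_mod_cast hn))
  · refine antitoneOn_nat_Ici_of_succ_le (f := f) (fun n hn ↦ ?_)
      Set.self_mem_Ici (Set.mem_Ici.2 hk) hk
    have hlt : μ < n + 1 :=
      (lt_floor_add_one μ).trans_le (by exact_mod_cast Nat.succ_le_succ hn)
    rw [hf]
    exact mul_le_of_le_one_right (by positivity) ((div_le_one (by positivity)).2 hlt.le)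

lemma exp_neg_mul_pow_le {μ : ℝ} (hμ : 0 ≤ μ) (n : ℕ) :
    exp (-μ) * μ ^ n ≤ exp (-n) * (n : ℝ) ^ n := by
  rcases n.eq_zero_or_pos with rfl | hn
  · simpa using hμ
  have hn' : (0 : ℝ) < n := by exact_mod_cast hn
  have hratio : (μ / n) ^ n ≤ exp (μ - n) := calc
    (μ / n) ^ n ≤ exp (μ / n - 1) ^ n := by
      gcongr
      linarith [add_one_le_exp (μ / n - 1)]
    _ = exp (μ - n) := by rw [← exp_nat_mul]; congr 1; field_simp
  calc exp (-μ) * μ ^ n = exp (-μ) * (n : ℝ) ^ n * (μ / n) ^ n := by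
        rw [div_pow]; field_simp
    _ ≤ exp (-μ) * (n : ℝ) ^ n * exp (μ - n) := by gcongr
    _ = exp (-n) * (n : ℝ) ^ n := by rw [mul_right_comm, ← exp_add]; ring_nf

lemma poissonTerm_le_inv_sqrt {μ : ℝ} (hμ : 1 ≤ μ) (k : ℕ) :
    poissonTerm μ k ≤ 1 / √(π * μ) := by
  set m := ⌊μ⌋₊
  have hm : (1 : ℝ) ≤ m := by exact_mod_cast le_floor (by exact_mod_cast hμ)
  have hμm : μ ≤ 2 * m := by linarith [lt_floor_add_one μ]
  have hstirling := Stirling.le_factorial_stirling m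
  calc poissonTerm μ k ≤ exp (-μ) * μ ^ m / m ! := by
        rw [poissonTerm, mul_div_assoc]
        exact mul_le_mul_of_nonneg_left (pow_div_factorial_le_floor (by linarith) k) (exp_pos _).le
    _ ≤ exp (-m) * (m : ℝ) ^ m / m ! :=
        div_le_div_of_nonneg_right (exp_neg_mul_pow_le (by linarith) m) (by positivity)
    _ = (m / exp 1) ^ m / m ! := by rw [div_pow, ← exp_nat_mul, exp_neg, mul_one]; ring
    _ ≤ 1 / √(2 * π * m) := by
        rw [div_le_div_iff₀ (by positivity) (by positivity)]
        linarith
    _ ≤ 1 / √(π * μ) :=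
        one_div_le_one_div_of_le (by positivity) (sqrt_le_sqrt (by nlinarith [pi_pos]))

lemma abs_poissonCDF_sub_le {lam lam' : ℝ} (hlam : 1 ≤ lam) (hle : lam ≤ lam') (n : ℕ) :
    |poissonCDF lam' n - poissonCDF lam n| ≤ 1 / √(π * lam) * (lam' - lam) := by
  have hbound : ∀ x ∈ Set.Icc lam lam', ‖-poissonTerm x n‖ ≤ 1 / √(π * lam) := by
    rintro x ⟨hx, -⟩
    rw [norm_neg, norm_of_nonneg (poissonTerm_nonneg (by linarith) n)]
    refine (poissonTerm_le_inv_sqrt (hlam.trans hx) n).trans ?_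
    gcongr
  simpa [abs_of_nonneg (sub_nonneg.2 hle)] using
    (convex_Icc lam lam').norm_image_sub_le_of_norm_hasDerivWithin_le
      (fun x _ ↦ (hasDerivAt_poissonCDF n x).hasDerivWithinAt) hbound
      (Set.left_mem_Icc.2 hle) (Set.right_mem_Icc.2 hle)

/-- If the set is empty then `sInf = 0`, and the bound still holds since `H_μ(1) = p_0 + p_1`. -/
lemma poissonCDF_sInf_succ_le {μ ρ : ℝ} (hμ : 1 ≤ μ) (hρ : 0 ≤ ρ) :
    poissonCDF μ (sInf {n | ρ < poissonCDF μ n} + 1) ≤ ρ + 2 / √(π * μ) := by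
  have hterm := poissonTerm_le_inv_sqrt hμ
  have htwo : 2 / √(π * μ) = 1 / √(π * μ) + 1 / √(π * μ) := by ring
  rcases hL : sInf {n | ρ < poissonCDF μ n} with _ | m
  · rw [poissonCDF_succ, poissonCDF_zero]
    linarith [hterm 0, hterm 1]
  · have hbelow : poissonCDF μ m ≤ ρ :=
      not_lt.1 (Nat.notMem_of_lt_sInf (s := {n | ρ < poissonCDF μ n}) (by omega))
    rw [poissonCDF_succ, poissonCDF_succ]
    linarith [hterm (m + 1), hterm (m + 2)]

lemma le_sSup_of_lt_one_sub_poissonCDF {μ ρ : ℝ} (hρ : 0 < ρ) {n : ℕ}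
    (hn : ρ < 1 - poissonCDF μ n) : n ≤ sSup {n : ℕ | ρ < 1 - poissonCDF μ n} := by
  obtain ⟨N, hN⟩ := eventually_atTop.1
    ((tendsto_poissonCDF_atTop μ).eventually (lt_mem_nhds (by linarith : 1 - ρ < 1)))
  refine le_csSup ⟨N, fun k hk ↦ ?_⟩ hn
  by_contra! hNk
  linarith [hN k hNk.le, Set.mem_ofPred_eq ▸ hk]

lemma sInf_poissonCDF_lt_sSup {lam B ρ : ℝ} (hlam : 1 ≤ lam) (hB : 0 ≤ B) (hρ : 0 < ρ)
    (hgap : (2 + B) / √(π * lam) < 1 - 2 * ρ) :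
    sInf {n : ℕ | ρ < poissonCDF (lam + B) n} < sSup {n : ℕ | ρ < 1 - poissonCDF lam n} := by
  set L := sInf {n : ℕ | ρ < poissonCDF (lam + B) n}
  have hshift := abs_le.1 (abs_poissonCDF_sub_le hlam (le_add_of_nonneg_right hB) (L + 1))
  have hquantile := poissonCDF_sInf_succ_le (μ := lam + B) (by linarith) hρ.le
  have hsqrt : 2 / √(π * (lam + B)) ≤ 2 / √(π * lam) := by gcongr; linarith
  have hsplit : (2 + B) / √(π * lam) = 2 / √(π * lam) + 1 / √(π * lam) * B := by ring
  have hmem : ρ < 1 - poissonCDF lam (L + 1) := by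
    rw [add_sub_cancel_left] at hshift
    linarith [hshift.1]
  exact Nat.lt_of_succ_le (le_sSup_of_lt_one_sub_poissonCDF hρ hmem)

/-- Lemma A.9: separation of lower and upper Poisson quantiles for large intensity.
`L^ρ_{λ+B} = min {n | H_{λ+B}(n) > ρ}` and `U^ρ_λ = max {n | 1 − H_λ(n) > ρ}`. -/
theorem stmt18 (B ρ : ℝ) (hB : 0 < B) (hρ0 : 0 < ρ) (hρ : ρ < 1 / 2) :
    ∃ lamStar > (0 : ℝ), ∀ lam ≥ lamStar,
      sInf {n : ℕ | ρ < poissonCDF (lam + B) n} <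
        sSup {n : ℕ | ρ < 1 - poissonCDF lam n} := by
  have hsmall : Tendsto (fun lam ↦ (2 + B) / √(π * lam)) atTop (𝓝 0) :=
    tendsto_const_nhds.div_atTop (tendsto_sqrt_atTop.comp (tendsto_id.const_mul_atTop pi_pos))
  obtain ⟨lam₀, hlam₀⟩ :=
    eventually_atTop.1 (hsmall.eventually (gt_mem_nhds (by linarith : (0 : ℝ) < 1 - 2 * ρ)))
  refine ⟨max lam₀ 1, by positivity, fun lam hlam ↦ ?_⟩
  exact sInf_poissonCDF_lt_sSup (le_of_max_le_right hlam) hB.le hρ0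
    (hlam₀ lam (le_of_max_le_left hlam))
end
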